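/- arXiv:0801.3792 — 11 statements merged into one kernel-verified Lean document; each statement's English description precedes it below -/
import Mathlib

section
/- Let G be an abelian group, a ∈ G with ord(a) > 2, and S, T nonempty finite sequences over G with |supp(S)| ≥ |supp(T)|. If supp(S) − supp(T) ⊆ {0, a}, then there exist g ∈ G and s ∈ [0, |S|] such that S = g^s (g+a)^{|S|−s} and T = g^{|T|}. -/
theorem stmt_1 {G : Type*} [AddCommGroup G] [DecidableEq G]
    (a : G) (ha : addOrderOf a = 0 ∨ 2 < addOrderOf a)
    (S T : Multiset G) (hS : S ≠ 0) (hT : T ≠ 0)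
    (hcard : T.toFinset.card ≤ S.toFinset.card)
    (hdiff : {x : G | ∃ s ∈ S.toFinset, ∃ t ∈ T.toFinset, x = s - t} ⊆ {0, a}) :
    ∃ g : G, ∃ s : ℕ, s ≤ Multiset.card S ∧
      S = Multiset.replicate s g + Multiset.replicate (Multiset.card S - s) (g + a) ∧
      T = Multiset.replicate (Multiset.card T) g := by
  have h2a : a + a ≠ 0 := by
    intro h
    have h' : (2 : ℕ) • a = 0 := by rw [two_nsmul]; exact h
    have hdvd : addOrderOf a ∣ 2 := addOrderOf_dvd_of_nsmul_eq_zero h'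
    rcases ha with h0 | h2
    · rw [h0] at hdvd
      simp at hdvd
    · have := Nat.le_of_dvd (by norm_num) hdvd; omega
  have ha0 : a ≠ 0 := by
    intro h; apply h2a; rw [h]; simp
  have key : ∀ s ∈ S.toFinset, ∀ u ∈ T.toFinset, s = u ∨ s = u + a := by
    intro s hs u hu
    have h := hdiff (show s - u ∈ _ from ⟨s, hs, u, hu, rfl⟩)
    rcases h with h | h
    · left; exact sub_eq_zero.mp h
    · right
      rw [Set.mem_singleton_iff, sub_eq_iff_eq_add] at h
      rw [h, add_comm]
  obtain ⟨t, ht⟩ : ∃ t, t ∈ T.toFinset := by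
    rcases Multiset.exists_mem_of_ne_zero hT with ⟨t, ht⟩
    exact ⟨t, Multiset.mem_toFinset.mpr ht⟩
  obtain ⟨s₀, hs₀⟩ : ∃ s, s ∈ S.toFinset := by
    rcases Multiset.exists_mem_of_ne_zero hS with ⟨s, hs⟩
    exact ⟨s, Multiset.mem_toFinset.mpr hs⟩
  have hTsingle : ∀ t' ∈ T.toFinset, t' = t := by
    intro t' ht'
    by_contra hne
    have hge : 2 ≤ T.toFinset.card :=
      Finset.one_lt_card.mpr ⟨t, ht, t', ht', fun h => hne h.symm⟩
    rcases key s₀ hs₀ t ht with h1 | h1 <;> rcases key s₀ hs₀ t' ht' with h2 | h2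
    · exact hne (h2.symm.trans h1)
    · -- t' + a = t, so t' = t - a; every s ∈ supp S equals t
      have ht'eq : t' = t - a := by
        rw [eq_sub_iff_add_eq]; exact h2.symm.trans h1
      have hSsing : ∀ s ∈ S.toFinset, s = t := by
        intro s hs
        rcases key s hs t ht with hA | hA
        · exact hA
        · rcases key s hs t' ht' with hB | hB
          · -- s = t + a and s = t - a : a + a = 0
            exfalso; apply h2a
            have : t + a = t - a := hA.symm.trans (hB.trans (by rw [ht'eq]))
            rw [sub_eq_add_neg] at this
            have := add_left_cancel this
            exact add_eq_zero_iff_eq_neg.mpr this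
          · -- s = t + a and s = t' + a = t : a = 0
            exfalso; apply ha0
            have : t + a = t := hA.symm.trans (hB.trans (by rw [ht'eq, sub_add_cancel]))
            exact add_eq_left.mp this
      have hle : S.toFinset.card ≤ 1 := by
        have : S.toFinset ⊆ {t} := fun x hx => Finset.mem_singleton.mpr (hSsing x hx)
        simpa using Finset.card_le_card this
      omega
    · -- t' = t + a; every s ∈ supp S equals t + a
      have ht'eq : t' = t + a := h2.symm.trans h1
      have hSsing : ∀ s ∈ S.toFinset, s = t + a := by
        intro s hs
        rcases key s hs t' ht' with hB | hB
        · rw [hB, ht'eq]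
        · rcases key s hs t ht with hA | hA
          · -- s = t and s = t' + a = t + a + a : a + a = 0
            exfalso; apply h2a
            have : t = t + (a + a) := hA.symm.trans (hB.trans (by rw [ht'eq, add_assoc]))
            exact (left_eq_add.mp this)
          · -- s = t + a and s = t' + a = t + a + a : a = 0
            exfalso; apply ha0
            have : t + a + a = t + a := (hB.trans (by rw [ht'eq])).symm.trans hA
            exact add_eq_left.mp this
      have hle : S.toFinset.card ≤ 1 := by
        have : S.toFinset ⊆ {t + a} := fun x hx => Finset.mem_singleton.mpr (hSsing x hx)
        simpa using Finset.card_le_card this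
      omega
    · exact hne (add_right_cancel (h2.symm.trans h1))
  have hSsub : ∀ s ∈ S.toFinset, s = t ∨ s = t + a := fun s hs => key s hs t ht
  have hta : t ≠ t + a := fun h => ha0 (left_eq_add.mp h)
  have hcount : S.count t + S.count (t + a) = Multiset.card S := by
    have hsum := Multiset.toFinset_sum_count_eq S
    have hsub : S.toFinset ⊆ ({t, t + a} : Finset G) := by
      intro x hx
      rcases hSsub x hx with h | h <;> simp [h]
    have hzero : ∀ x ∈ ({t, t + a} : Finset G), x ∉ S.toFinset → S.count x = 0 := by
      intro x _ hx
      rwa [Multiset.count_eq_zero, ← Multiset.mem_toFinset]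
    rw [← hsum, Finset.sum_subset hsub hzero, Finset.sum_pair hta]
  refine ⟨t, S.count t, Multiset.count_le_card t S, ?_, ?_⟩
  · ext b
    simp only [Multiset.count_add, Multiset.count_replicate]
    split_ifs with h1 h2 h2
    · exact absurd (h1.trans h2.symm) hta
    · subst h1; omega
    · subst h2; omega
    · have hb0 : S.count b = 0 := by
        rw [Multiset.count_eq_zero]
        intro hb
        rcases hSsub b (Multiset.mem_toFinset.mpr hb) with h | h
        · exact h1 h.symm
        · exact h2 h.symm
      omega
  · rw [Multiset.eq_replicate_card]
    intro b hb
    exact hTsingle b (Multiset.mem_toFinset.mpr hb)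
end

section
/- Let G be an abelian group, a ∈ G with ord(a) > 2, and S, T finite sequences over G with |S|, |T| ≥ 2 and |supp(S)| ≥ |supp(T)|. If for i = 1, 2 every difference of an i-term subsum of S and an i-term subsum of T lies in {0, a}, then either S = g^{|S|−1}(g+a) and T = g^{|T|}, or S = g^{|S|} and T = g^{|T|}, for some g ∈ G. -/
/-- The set of sums of `k`-term subsequences of `S`. -/
def subsums {G : Type*} [AddCommGroup G] (S : Multiset G) (k : ℕ) : Set G :=
  {x | ∃ T ≤ S, Multiset.card T = k ∧ T.sum = x}

theorem stmt_2 {G : Type*} [AddCommGroup G] [DecidableEq G]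
    (a : G) (ha : addOrderOf a = 0 ∨ 2 < addOrderOf a)
    (S T : Multiset G) (hS : 2 ≤ Multiset.card S) (hT : 2 ≤ Multiset.card T)
    (hcard : T.toFinset.card ≤ S.toFinset.card)
    (hdiff : ∀ i : ℕ, i = 1 ∨ i = 2 →
      ∀ x ∈ subsums S i, ∀ y ∈ subsums T i, x - y ∈ ({0, a} : Set G)) :
    ∃ g : G,
      (S = Multiset.replicate (Multiset.card S - 1) g + {g + a} ∧
        T = Multiset.replicate (Multiset.card T) g) ∨
      (S = Multiset.replicate (Multiset.card S) g ∧
        T = Multiset.replicate (Multiset.card T) g) := by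
  have ha0 : a ≠ 0 := by
    intro h; rcases ha with h1 | h1 <;> simp [h] at h1
  have ha2 : a + a ≠ 0 := by
    intro h
    have hd : addOrderOf a ∣ 2 :=
      addOrderOf_dvd_of_nsmul_eq_zero (by simpa [two_nsmul] using h)
    have h2 := Nat.le_of_dvd (by norm_num) hd
    rcases ha with h1 | h1
    · rw [h1] at hd; norm_num at hd
    · omega
  have hmem1 : ∀ {U : Multiset G} (x : G), x ∈ U → x ∈ subsums U 1 := by
    intro U x hx
    exact ⟨{x}, Multiset.singleton_le.2 hx, by simp, by simp⟩
  have hd1 : ∀ s ∈ S, ∀ t ∈ T, s - t = 0 ∨ s - t = a := by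
    intro s hs t ht
    have := hdiff 1 (Or.inl rfl) s (hmem1 s hs) t (hmem1 t ht)
    simpa [Set.mem_insert_iff] using this
  obtain ⟨s0, hs0⟩ : ∃ s, s ∈ S :=
    Multiset.exists_mem_of_ne_zero (by intro h; rw [h] at hS; simp at hS)
  have hTconst : ∀ t1 ∈ T, ∀ t2 ∈ T, t1 = t2 := by
    by_contra hcon
    push_neg at hcon
    obtain ⟨t1, ht1, t2, ht2, hne⟩ := hcon
    have hst : ∀ s ∈ S, (s = t1 ∧ t1 = a + t2) ∨ (s = t2 ∧ t2 = a + t1) := by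
      intro s hs
      rcases hd1 s hs t1 ht1 with h1 | h1 <;> rcases hd1 s hs t2 ht2 with h2 | h2
      · rw [sub_eq_zero] at h1 h2; exact absurd (h1.symm.trans h2) hne
      · rw [sub_eq_zero] at h1; rw [sub_eq_iff_eq_add] at h2
        exact Or.inl ⟨h1, by rw [← h1, h2]⟩
      · rw [sub_eq_zero] at h2; rw [sub_eq_iff_eq_add] at h1
        exact Or.inr ⟨h2, by rw [← h2, h1]⟩
      · rw [sub_eq_iff_eq_add] at h1 h2
        exact absurd (add_left_cancel (h1.symm.trans h2)) hne
    have hexc : ¬ (t1 = a + t2 ∧ t2 = a + t1) := by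
      rintro ⟨p, q⟩
      apply ha2
      have : (a + a) + t1 = 0 + t1 := by
        rw [zero_add]; nth_rewrite 2 [p]; rw [q]; abel
      exact add_right_cancel this
    obtain ⟨c, hall⟩ : ∃ c, ∀ s ∈ S, s = c := by
      rcases hst s0 hs0 with ⟨h, hA⟩ | ⟨h, hB⟩
      · refine ⟨t1, fun s hs => ?_⟩
        rcases hst s hs with ⟨h', _⟩ | ⟨_, hB⟩
        · exact h'
        · exact absurd ⟨hA, hB⟩ hexc
      · refine ⟨t2, fun s hs => ?_⟩
        rcases hst s hs with ⟨_, hA⟩ | ⟨h', _⟩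
        · exact absurd ⟨hA, hB⟩ hexc
        · exact h'
    have hsub : S.toFinset ⊆ {c} := by
      intro x hx
      rw [Multiset.mem_toFinset] at hx
      simp [hall x hx]
    have hS1 : S.toFinset.card ≤ 1 := by
      simpa using Finset.card_le_card hsub
    have hsub2 : ({t1, t2} : Finset G) ⊆ T.toFinset := by
      intro x hx
      rw [Finset.mem_insert, Finset.mem_singleton] at hx
      rcases hx with rfl | rfl <;> rw [Multiset.mem_toFinset] <;> assumption
    have hT2 : 2 ≤ T.toFinset.card := by
      have := Finset.card_le_card hsub2
      rwa [Finset.card_insert_of_notMem (by simpa using hne), Finset.card_singleton] at this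
    omega
  obtain ⟨g, hg⟩ : ∃ g, g ∈ T :=
    Multiset.exists_mem_of_ne_zero (by intro h; rw [h] at hT; simp at hT)
  have hTrep : T = Multiset.replicate (Multiset.card T) g := by
    rw [Multiset.eq_replicate_card]
    exact fun t ht => hTconst t ht g hg
  have hSg : ∀ s ∈ S, s = g ∨ s = g + a := by
    intro s hs
    rcases hd1 s hs g hg with h | h
    · exact Or.inl (sub_eq_zero.mp h)
    · exact Or.inr (by rw [sub_eq_iff_eq_add] at h; rw [h, add_comm])
  have hgg : g + g ∈ subsums T 2 := by
    refine ⟨Multiset.replicate 2 g, ?_, by simp, by simp [two_nsmul]⟩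
    rw [hTrep]
    exact Multiset.replicate_le_replicate g |>.2 hT
  have hcount : S.count (g + a) ≤ 1 := by
    by_contra h
    push_neg at h
    have hle : Multiset.replicate 2 (g + a) ≤ S :=
      Multiset.le_count_iff_replicate_le.mp h
    have hx : (g + a) + (g + a) ∈ subsums S 2 :=
      ⟨_, hle, by simp, by simp [two_nsmul]⟩
    have hmem := hdiff 2 (Or.inr rfl) _ hx _ hgg
    have hrw : (g + a) + (g + a) - (g + g) = a + a := by abel
    rw [hrw] at hmem
    rcases hmem with h' | h'
    · exact ha2 h'
    · exact ha0 (add_eq_right.mp h')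
  rcases Nat.lt_or_ge (S.count (g + a)) 1 with hc | hc
  · -- count = 0 : S constant g
    have hc0 : (g + a) ∉ S := by
      rw [← Multiset.count_eq_zero]; omega
    refine ⟨g, Or.inr ⟨?_, hTrep⟩⟩
    rw [Multiset.eq_replicate_card]
    intro s hs
    rcases hSg s hs with h | h
    · exact h
    · exact absurd (h ▸ hs) hc0
  · -- count = 1
    have hc1 : S.count (g + a) = 1 := le_antisymm hcount hc
    have hmemS : g + a ∈ S := by rw [← Multiset.count_pos]; omega
    have hc' : (S.erase (g + a)).count (g + a) = 0 := by
      rw [Multiset.count_erase_self]; omega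
    have hnotmem : (g + a) ∉ S.erase (g + a) := by
      rw [← Multiset.count_eq_zero]; exact hc'
    have hrep' : S.erase (g + a) = Multiset.replicate (Multiset.card (S.erase (g + a))) g := by
      rw [Multiset.eq_replicate_card]
      intro s hs
      rcases hSg s (Multiset.mem_of_mem_erase hs) with h | h
      · exact h
      · exact absurd (h ▸ hs) hnotmem
    have hcard' : Multiset.card (S.erase (g + a)) = Multiset.card S - 1 :=
      Multiset.card_erase_of_mem hmemS
    refine ⟨g, Or.inl ⟨?_, hTrep⟩⟩
    conv_lhs => rw [← Multiset.cons_erase hmemS]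
    rw [hrep', hcard', ← Multiset.singleton_add, add_comm {g + a}]
end

section
/- Let G be an abelian group and S a finite sequence over G. If k ∈ [1, |S|−1] and |Σ_k(S)| ≤ 2, then |supp(S)| ≤ 2. -/
namespace Multiset

variable {α : Type*}

theorem exists_le_card_eq {S : Multiset α} {n : ℕ} (hn : n ≤ card S) :
    ∃ T ≤ S, card T = n := by
  have hpos : 0 < card (powersetCard n S) := by
    rw [card_powersetCard]
    exact Nat.choose_pos hn
  obtain ⟨T, hT⟩ := card_pos_iff_exists_mem.mp hpos
  exact ⟨T, mem_powersetCard.mp hT⟩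

theorem exists_le_le_card_eq [DecidableEq α] {s S : Multiset α} {n : ℕ} (hsS : s ≤ S)
    (hsn : card s ≤ n) (hnS : n ≤ card S) : ∃ T, s ≤ T ∧ T ≤ S ∧ card T = n := by
  obtain ⟨R, hRS, hR⟩ := exists_le_card_eq (S := S - s) (n := n - card s)
    (by rw [card_sub hsS]; omega)
  refine ⟨s + R, le_add_right s R, ?_, by rw [card_add, hR]; omega⟩
  calc s + R ≤ s + (S - s) := add_le_add_right hRS s
    _ = S := add_tsub_cancel_of_le hsS

end Multiset

section subsums

variable {G : Type*} [AddCommGroup G]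

theorem subsums_finite (S : Multiset G) (k : ℕ) : (subsums S k).Finite := by
  classical
  refine (S.powerset.toFinset.image Multiset.sum).finite_toSet.subset ?_
  rintro x ⟨T, hTS, -, rfl⟩
  simpa using ⟨T, hTS, rfl⟩

theorem subsums_one [DecidableEq G] (S : Multiset G) : subsums S 1 = S.toFinset := by
  ext x
  simp only [subsums, Multiset.card_eq_one, Set.mem_ofPred_eq, Finset.mem_coe,
    Multiset.mem_toFinset]
  constructor
  · rintro ⟨T, hTS, ⟨y, rfl⟩, rfl⟩
    simpa using hTS
  · intro hx
    exact ⟨{x}, Multiset.singleton_le.mpr hx, ⟨x, rfl⟩, Multiset.sum_singleton x⟩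

theorem sum_sub_mem_subsums [DecidableEq G] {S T : Multiset G} {k : ℕ} (hTS : T ≤ S)
    (hT : Multiset.card T = k + 1) {x : G} (hx : x ∈ T) : T.sum - x ∈ subsums S k := by
  refine ⟨T.erase x, (Multiset.erase_le x T).trans hTS, ?_, ?_⟩
  · rw [Multiset.card_erase_of_mem hx, hT, Nat.pred_succ]
  · rw [eq_sub_iff_add_eq, add_comm, ← Multiset.sum_cons, Multiset.cons_erase hx]

theorem card_toFinset_le_ncard_subsums [DecidableEq G] {S T : Multiset G} {k : ℕ}
    (hTS : T ≤ S) (hT : Multiset.card T = k + 1) :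
    T.toFinset.card ≤ (subsums S k).ncard := by
  rw [← Set.ncard_coe_finset,
    ← Set.ncard_image_of_injective _ (sub_right_injective (b := T.sum))]
  refine Set.ncard_le_ncard ?_ (subsums_finite S k)
  rintro _ ⟨x, hx, rfl⟩
  exact sum_sub_mem_subsums hTS hT (by simpa using hx)

end subsums

theorem stmt_3 {G : Type*} [AddCommGroup G] [DecidableEq G]
    (S : Multiset G) (k : ℕ) (hk1 : 1 ≤ k) (hk2 : k ≤ Multiset.card S - 1)
    (hsub : (subsums S k).ncard ≤ 2) :
    S.toFinset.card ≤ 2 := by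
  obtain rfl | hk := hk1.eq_or_lt
  · rwa [subsums_one, Set.ncard_coe_finset] at hsub
  by_contra! hsupp
  obtain ⟨s, hsS, hs⟩ := Finset.exists_subset_card_eq hsupp
  have hs_le : s.val ≤ S := (Finset.val_le_iff.mpr hsS).trans (Multiset.dedup_le S)
  obtain ⟨T, hsT, hTS, hT⟩ :=
    Multiset.exists_le_le_card_eq hs_le (n := k + 1) (by rw [Finset.card_val]; omega) (by omega)
  have hs_supp : s ⊆ T.toFinset := fun x hx =>
    Multiset.mem_toFinset.mpr (Multiset.mem_of_le hsT hx)
  have := Finset.card_le_card hs_supp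
  have := card_toFinset_le_ncard_subsums hTS hT
  omega
end

section
/- Let G be a cyclic group of order n ≥ 2 and S a sequence over G of length |S| ≥ 2n−1. Then 0 ∈ Σ_n(S), i.e., S has an n-term subsequence summing to zero. -/
theorem AddEquiv.exists_zero_sum_submultiset {H G : Type*} [AddCommMonoid H] [AddCommMonoid G]
    (e : H ≃+ G) {S : Multiset G} {n : ℕ}
    (h : ∃ T ≤ S.map e.symm, Multiset.card T = n ∧ T.sum = 0) :
    ∃ T ≤ S, Multiset.card T = n ∧ T.sum = 0 := by
  obtain ⟨T, hTS, hcard, hsum⟩ := h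
  refine ⟨T.map e, ?_, by rw [Multiset.card_map, hcard], by rw [← map_multiset_sum, hsum, map_zero]⟩
  simpa [Multiset.map_map] using Multiset.map_le_map (f := e) hTS

theorem IsAddCyclic.erdos_ginzburg_ziv_multiset {G : Type*} [AddCommGroup G] [IsAddCyclic G]
    (S : Multiset G) (hS : 2 * Nat.card G - 1 ≤ Multiset.card S) :
    ∃ T ≤ S, Multiset.card T = Nat.card G ∧ T.sum = 0 :=
  (zmodAddCyclicAddEquiv ‹_›).exists_zero_sum_submultiset <|
    ZMod.erdos_ginzburg_ziv_multiset _ (by rwa [Multiset.card_map])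

theorem stmt_6_general {G : Type*} [AddCommGroup G] [Fintype G] [IsAddCyclic G]
    (n : ℕ) (hG : Fintype.card G = n)
    (S : Multiset G) (hS : 2 * n - 1 ≤ Multiset.card S) :
    ∃ T ≤ S, Multiset.card T = n ∧ T.sum = 0 := by
  rw [← hG, ← Nat.card_eq_fintype_card] at hS ⊢
  exact IsAddCyclic.erdos_ginzburg_ziv_multiset S hS

theorem stmt_6 {G : Type*} [AddCommGroup G] [Fintype G] [IsAddCyclic G]
    (n : ℕ) (hn : 2 ≤ n) (hG : Fintype.card G = n)
    (S : Multiset G) (hS : 2 * n - 1 ≤ Multiset.card S) :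
    ∃ T ≤ S, Multiset.card T = n ∧ T.sum = 0 :=
  stmt_6_general n hG S hS
end

section
/- Let K = C_m ⊕ C_m with m ≥ 4, let (f_1, f_2) be part of data defining S = f_1^{m−1} ∏_{ν=1}^{m} (x_ν f_1 + f_2) with x_1,…,x_m ∈ ℤ, where f_1 has multiplicity exactly m−1 and S has a unique element of multiplicity m−1 (S ∈ Υ_u(K)). If g ∈ K and the sequence S' obtained from S by removing two copies of f_1 and adding f_1 + g and f_1 − g lies in Υ(K), then g = 0 (and hence S' = S). -/
/-!
Write `S = f1^(m-1) ∏ (x_ν f1 + e2)` (uniqueness of the term of multiplicity `m - 1` forces the first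
basis element to be `f1`) and `S' = e^(m-1) ∏ (t_ν e + e')`. If `g ≠ 0`, then `f1` occurs only
`m - 3` times in `S'`, so `e ≠ f1` and `f1` lies on the coset `e' + ⟨e⟩`. If `e ∉ {f1 + g, f1 - g}`,
then `e` has multiplicity `m - 1` in `S` too, against uniqueness. Otherwise `e` is a term of `S`
other than `f1`, so it lies on the coset `e2 + ⟨f1⟩`, and the rigidity used twice is: if `a` also lies
on that coset and `a - f1 = k • e`, comparing `e2`-coordinates gives `k ≡ 1 (mod m)`, i.e.
`a = e + f1`. If exactly one of `f1 ± g` is `e`, this applies to `a = e` (as `±g` is a multiple of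
`e`) and gives `f1 = 0`. If both are, it shows that `S = f1^(m-1) e^(m-3) (e + f1)^3`, whose sum is
`2 • f1 ≠ 0`.
-/

/-- A minimal zero-sum sequence: nonempty, sum zero, and no proper nonempty
subsequence has sum zero. -/
def IsMinZeroSum {G : Type*} [AddCommGroup G] (S : Multiset G) : Prop :=
  S ≠ 0 ∧ S.sum = 0 ∧ ∀ T ≤ S, T ≠ 0 → T ≠ S → T.sum ≠ 0

/-- `(e1, e2)` is a basis of a group of the form `C_n ⊕ C_n`: both elements have
order `n`, they generate the group, and they are independent. -/
def IsBasisPair {G : Type*} [AddCommGroup G] (n : ℕ) (e1 e2 : G) : Prop :=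
  addOrderOf e1 = n ∧ addOrderOf e2 = n ∧
    (∀ g : G, ∃ x y : ℤ, g = x • e1 + y • e2) ∧
    (∀ x y : ℤ, x • e1 + y • e2 = 0 → x • e1 = 0 ∧ y • e2 = 0)

/-- Membership in `Υ(G)` for `G = C_n ⊕ C_n`: a minimal zero-sum sequence of the
form `e1^(n-1) ∏_{ν=1}^n (x_ν e1 + e2)` for some basis `(e1, e2)` and
`x_1, …, x_n ∈ [0, n-1]` with `x_1 + … + x_n ≡ 1 (mod n)`. -/
def InUpsilon {G : Type*} [AddCommGroup G] (n : ℕ) (S : Multiset G) : Prop :=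
  IsMinZeroSum S ∧ ∃ e1 e2 : G, IsBasisPair n e1 e2 ∧
    ∃ x : Fin n → ℕ, (∀ ν, x ν ≤ n - 1) ∧ (∑ ν, x ν) ≡ 1 [MOD n] ∧
      S = Multiset.replicate (n - 1) e1 +
        Multiset.map (fun ν => (x ν : ℤ) • e1 + e2) Finset.univ.val

/-- Membership in `Υ_u(G)`: member of `Υ(G)` with a unique term of
multiplicity `n - 1`. -/
def InUpsilonU {G : Type*} [AddCommGroup G] [DecidableEq G] (n : ℕ)
    (S : Multiset G) : Prop :=
  InUpsilon n S ∧ ∃! g : G, S.count g = n - 1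

/-- Membership in `Υ_nu(G) = Υ(G) \ Υ_u(G)`. -/
def InUpsilonNU {G : Type*} [AddCommGroup G] [DecidableEq G] (n : ℕ)
    (S : Multiset G) : Prop :=
  InUpsilon n S ∧ ¬ ∃! g : G, S.count g = n - 1

namespace Multiset

variable {α : Type*} [DecidableEq α]

theorem count_cons_cons_sub_replicate {a f : α} (u v : α) (S : Multiset α) (h : a ≠ f) :
    (u ::ₘ v ::ₘ (S - replicate 2 f)).count a =
      S.count a + (if a = v then 1 else 0) + (if a = u then 1 else 0) := by
  rw [count_cons, count_cons, count_sub, count_replicate, if_neg h.symm, Nat.sub_zero]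

theorem count_cons_cons_sub_replicate_self {f u v : α} (S : Multiset α) (hu : f ≠ u)
    (hv : f ≠ v) :
    (u ::ₘ v ::ₘ (S - replicate 2 f)).count f = S.count f - 2 := by
  rw [count_cons, count_cons, count_sub, count_replicate_self, if_neg hu, if_neg hv]
  rfl

theorem mem_cons_cons_sub_replicate {a f : α} (u v : α) {S : Multiset α} (ha : a ∈ S)
    (h : a ≠ f) :
    a ∈ u ::ₘ v ::ₘ (S - replicate 2 f) := by
  refine count_pos.mp ?_
  rw [count_cons_cons_sub_replicate u v S h]
  have := count_pos.mpr ha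
  omega

theorem sum_ne_zero_of_forall_mem_eq_or_eq_or_eq_add {G : Type*} [AddCommGroup G]
    [DecidableEq G] {m : ℕ} {S : Multiset G} {e f : G} (hm : 3 ≤ m)
    (hf : addOrderOf f = m) (he : addOrderOf e = m) (hef : e ≠ f)
    (hcard : card S = 2 * m - 1) (hcf : S.count f = m - 1) (hce : S.count e = m - 3)
    (hS : ∀ a ∈ S, a = f ∨ a = e ∨ a = e + f) : S.sum ≠ 0 := by
  have hf0 : f ≠ 0 := fun h => by rw [h, addOrderOf_zero] at hf; omega
  have he0 : e ≠ 0 := fun h => by rw [h, addOrderOf_zero] at he; omega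
  have hT : ∀ a ∈ S, a ∈ ({f, e, e + f} : Finset G) := by simpa using hS
  have hf_notMem : f ∉ ({e, e + f} : Finset G) := by simp [hef.symm, he0]
  have he_notMem : e ∉ ({e + f} : Finset G) := by simp [hf0]
  have hcef : S.count (e + f) = 3 := by
    have := sum_count_eq_card hT
    rw [Finset.sum_insert hf_notMem, Finset.sum_insert he_notMem, Finset.sum_singleton] at this
    omega
  rw [Finset.sum_multiset_count_of_subset S _ fun a ha => hT a (mem_toFinset.mp ha),
    Finset.sum_insert hf_notMem, Finset.sum_insert he_notMem, Finset.sum_singleton,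
    hcf, hce, hcef]
  intro h
  obtain ⟨k, rfl⟩ : ∃ k, m = k + 3 := ⟨m - 3, by omega⟩
  rw [show k + 3 - 1 = k + 2 by omega, Nat.add_sub_cancel] at h
  have hmf : (k + 3) • f = 0 := hf ▸ addOrderOf_nsmul_eq_zero f
  have hme : (k + 3) • e = 0 := he ▸ addOrderOf_nsmul_eq_zero e
  have h2f : 2 • f = 0 := by linear_combination (norm := module) h - hmf - hme
  have := Nat.le_of_dvd two_pos (hf ▸ addOrderOf_dvd_of_nsmul_eq_zero h2f)
  omega

end Multiset

section BasisPair

variable {G : Type*} [AddCommGroup G] {n : ℕ} {f e2 : G}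

theorem IsBasisPair.dvd_of_zsmul_add_zsmul_eq_zero (hb : IsBasisPair n f e2) {a b : ℤ}
    (h : a • f + b • e2 = 0) : (n : ℤ) ∣ b :=
  hb.2.1 ▸ addOrderOf_dvd_iff_zsmul_eq_zero.mpr (hb.2.2.2 a b h).2

theorem IsBasisPair.zsmul_add_ne (hn : n ≠ 1) (hb : IsBasisPair n f e2) (c : ℤ) :
    c • f + e2 ≠ f := by
  intro h
  have hdvd : (n : ℤ) ∣ 1 :=
    hb.dvd_of_zsmul_add_zsmul_eq_zero (a := c - 1) (by linear_combination (norm := module) h)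
  exact hn (Nat.dvd_one.mp (by exact_mod_cast hdvd))

theorem IsBasisPair.sub_eq_of_sub_eq_zsmul (hb : IsBasisPair n f e2) {e a : G} {c d k : ℤ}
    (hord : addOrderOf e = n) (he : e = c • f + e2) (ha : a = d • f + e2)
    (hk : a - f = k • e) : a - f = e := by
  have hdvd : (n : ℤ) ∣ k - 1 := hb.dvd_of_zsmul_add_zsmul_eq_zero (a := k * c - d + 1)
    (by linear_combination (norm := module) ha - hk - k • he)
  rw [hk]
  refine (zsmul_eq_zsmul_iff_modEq.mpr ?_).trans (one_zsmul e)
  rw [hord]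
  exact (Int.modEq_iff_dvd.mpr hdvd).symm

theorem IsBasisPair.ne_add_of_sub_eq {e e' g : G} {c s t : ℤ} (hn : n ≠ 1)
    (hb : IsBasisPair n f e2) (hord : addOrderOf e = n) (he : e = c • f + e2)
    (hf : f = s • e + e') (hg : f - g = t • e + e') : e ≠ f + g := by
  intro heg
  have h : e - f = e := hb.sub_eq_of_sub_eq_zsmul hord he he (k := s - t)
    (by linear_combination (norm := module) heg + hf - hg)
  exact hn (hb.1 ▸ AddMonoid.addOrderOf_eq_one_iff.mpr (sub_eq_self.mp h))

theorem IsBasisPair.eq_or_eq_or_eq_add_of_mem {e e' : G} {c s : ℤ} {S : Multiset G}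
    (hb : IsBasisPair n f e2) (hord : addOrderOf e = n) (he : e = c • f + e2) (hf : f = s • e + e')
    (hline : ∀ a ∈ S, a ≠ f → ∃ d : ℤ, a = d • f + e2)
    (hline' : ∀ a ∈ S, a ≠ f → a ≠ e → ∃ t : ℤ, a = t • e + e') :
    ∀ a ∈ S, a = f ∨ a = e ∨ a = e + f := by
  intro a ha
  by_cases haf : a = f
  · exact .inl haf
  by_cases hae : a = e
  · exact .inr (.inl hae)
  obtain ⟨d, hd⟩ := hline a ha haf
  obtain ⟨t, ht⟩ := hline' a ha haf hae
  exact .inr (.inr (eq_add_of_sub_eq (hb.sub_eq_of_sub_eq_zsmul hord he hd (k := t - s)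
    (by linear_combination (norm := module) ht - hf))))

end BasisPair

theorem InUpsilon.exists_isBasisPair {G : Type*} [AddCommGroup G] [DecidableEq G] {n : ℕ}
    {S : Multiset G} (hn : n ≠ 1) (hS : InUpsilon n S) :
    ∃ e1 e2 : G, IsBasisPair n e1 e2 ∧ S.count e1 = n - 1 ∧ Multiset.card S = 2 * n - 1 ∧
      ∀ a ∈ S, a ≠ e1 → ∃ t : ℤ, a = t • e1 + e2 := by
  obtain ⟨-, e1, e2, hb, x, -, -, rfl⟩ := hS
  refine ⟨e1, e2, hb, ?_, by simp; omega, fun a ha hne => ?_⟩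
  · rw [Multiset.count_add, Multiset.count_replicate_self, Multiset.count_eq_zero.mpr, add_zero]
    simpa using fun ν => hb.zsmul_add_ne hn (x ν)
  · rcases Multiset.mem_add.mp ha with ha | ha
    · exact absurd (Multiset.eq_of_mem_replicate ha) hne
    · obtain ⟨ν, -, rfl⟩ := Multiset.mem_map.mp ha
      exact ⟨x ν, rfl⟩

theorem stmt_9_general (m : ℕ) (hm : 4 ≤ m)
    (f1 : ZMod m × ZMod m)
    (S : Multiset (ZMod m × ZMod m))
    (hcount : S.count f1 = m - 1)
    (hSu : InUpsilonU m S)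
    (g : ZMod m × ZMod m)
    (h' : InUpsilon m ((f1 + g) ::ₘ (f1 - g) ::ₘ (S - Multiset.replicate 2 f1))) :
    g = 0 := by
  by_contra hg
  obtain ⟨hS, huniq⟩ := hSu
  obtain ⟨e1, e2, hb, he1, hcard, hline⟩ := hS.exists_isBasisPair (by omega)
  obtain rfl : f1 = e1 := huniq.unique hcount he1
  obtain ⟨e, e', hb', he, -, hline'⟩ := h'.exists_isBasisPair (by omega)
  have hcount' : ((f1 + g) ::ₘ (f1 - g) ::ₘ (S - Multiset.replicate 2 f1)).count f1 = m - 3 := by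
    rw [Multiset.count_cons_cons_sub_replicate_self S (by simpa using hg)
      (by rwa [ne_comm, ne_eq, sub_eq_self]), hcount]
    omega
  have hef : e ≠ f1 := by rintro rfl; omega
  obtain ⟨s, hf⟩ := hline' f1 (Multiset.count_pos.mp (by omega)) hef.symm
  rw [Multiset.count_cons_cons_sub_replicate _ _ S hef] at he
  obtain ⟨c, hc⟩ := hline e (Multiset.count_pos.mp (by split_ifs at he <;> omega)) hef
  by_cases hA : e = f1 + g <;> by_cases hB : e = f1 - g
  · rw [if_pos hB, if_pos hA] at he
    exact Multiset.sum_ne_zero_of_forall_mem_eq_or_eq_or_eq_add (by omega) hb.1 hb'.1 hef hcard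
      hcount (by omega) (hb.eq_or_eq_or_eq_add_of_mem hb'.1 hc hf hline
        fun a ha haf => hline' a (Multiset.mem_cons_cons_sub_replicate _ _ ha haf)) hS.1.2.1
  · obtain ⟨t, ht⟩ := hline' (f1 - g) (by simp) (Ne.symm hB)
    exact hb.ne_add_of_sub_eq (by omega) hb'.1 hc hf ht hA
  · obtain ⟨t, ht⟩ := hline' (f1 + g) (by simp) (Ne.symm hA)
    exact hb.ne_add_of_sub_eq (g := -g) (by omega) hb'.1 hc hf (by rwa [sub_neg_eq_add])
      (by rwa [← sub_eq_add_neg])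
  · rw [if_neg hB, if_neg hA, add_zero, add_zero] at he
    exact hef (huniq.unique he hcount)

theorem stmt_9 (m : ℕ) (hm : 4 ≤ m)
    (f1 f2 : ZMod m × ZMod m) (x : Fin m → ℤ)
    (S : Multiset (ZMod m × ZMod m))
    (hS : S = Multiset.replicate (m - 1) f1 +
        Multiset.map (fun ν => x ν • f1 + f2) Finset.univ.val)
    (hcount : S.count f1 = m - 1)
    (hSu : InUpsilonU m S)
    (g : ZMod m × ZMod m)
    (h' : InUpsilon m ((f1 + g) ::ₘ (f1 - g) ::ₘ (S - Multiset.replicate 2 f1))) :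
    g = 0 :=
  stmt_9_general m hm f1 S hcount hSu g h'
end

section
/- Let K = C_m ⊕ C_m with m ≥ 4, (f_1, f_2) a basis of K, S = f_1^{m−1} f_2^{m−1} (f_1 + f_2), and g ∈ K. If the sequence S' obtained from S by removing one copy of f_1 and one copy of f_2 and adding f_1 + g and f_2 − g lies in Υ(K), then S' = S and g ∈ {0, −f_1 + f_2}. -/
/-!
In any sequence of `Υ(K)` the first basis element `e₁` occurs exactly `m - 1` times, since no
`x • e₁ + e₂` equals `e₁`. In `S' = (f₁ + g)(f₂ - g) f₁^(m-2) f₂^(m-2) (f₁ + f₂)` an element other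
than `f₁, f₂` occurs at most three times, and three times only if it equals `f₁ + g`, `f₂ - g` and
`f₁ + f₂`, and then its double equals itself, so it is `0`. So `e₁ ∈ {f₁, f₂}`, and the missing copy of `e₁` must be
`f₁ + g` or `f₂ - g`; each of the four possibilities gives `g = 0` or `g = f₂ - f₁`.
-/

open Multiset

lemma Multiset.eq_or_eq_of_count_cons_cons {α : Type*} [DecidableEq α] {a b e : α}
    {T : Multiset α} (h : (a ::ₘ b ::ₘ T).count e = T.count e + 1) : a = e ∨ b = e := by
  by_contra! hne
  simp [Ne.symm hne.1, Ne.symm hne.2] at h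

section

variable {G : Type*} [AddCommGroup G]

lemma IsBasisPair.left_ne_zero {n : ℕ} {e1 e2 : G} (h : IsBasisPair n e1 e2) (hn : n ≠ 1) :
    e1 ≠ 0 := by
  rintro rfl
  exact hn (h.1.symm.trans addOrderOf_zero)

lemma IsBasisPair.right_ne_zero {n : ℕ} {e1 e2 : G} (h : IsBasisPair n e1 e2) (hn : n ≠ 1) :
    e2 ≠ 0 := by
  rintro rfl
  exact hn (h.2.1.symm.trans addOrderOf_zero)

lemma IsBasisPair.left_ne_right {n : ℕ} {e1 e2 : G} (h : IsBasisPair n e1 e2) (hn : n ≠ 1) :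
    e1 ≠ e2 := by
  intro heq
  have := (h.2.2.2 1 (-1) (by rw [heq, neg_smul, add_neg_cancel])).1
  exact h.left_ne_zero hn (by simpa using this)

variable [DecidableEq G]

lemma IsBasisPair.count_left_eq {n : ℕ} {e1 e2 : G} (h : IsBasisPair n e1 e2) (hn : n ≠ 1)
    (x : Fin n → ℕ) :
    (replicate (n - 1) e1 + map (fun ν => (x ν : ℤ) • e1 + e2) Finset.univ.val).count e1
      = n - 1 := by
  rw [count_add, count_replicate_self, add_eq_left, count_eq_zero]
  intro hmem
  obtain ⟨ν, -, hν⟩ := mem_map.mp hmem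
  have hrel : ((x ν : ℤ) - 1) • e1 + (1 : ℤ) • e2 = 0 := by
    rw [sub_smul, one_smul, one_smul, sub_add_eq_add_sub, hν, sub_self]
  exact h.right_ne_zero hn (by simpa using (h.2.2.2 _ _ hrel).2)

lemma InUpsilon.exists_count_eq {n : ℕ} {S : Multiset G} (h : InUpsilon n S) (hn : n ≠ 1) :
    ∃ e ≠ (0 : G), S.count e = n - 1 := by
  obtain ⟨-, e1, e2, hbasis, x, -, -, rfl⟩ := h
  exact ⟨e1, hbasis.left_ne_zero hn, hbasis.count_left_eq hn x⟩

lemma eq_zero_or_eq_sub_of_count_eq {k : ℕ} (hk : 2 ≤ k) {f1 f2 g e : G}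
    (hf1 : f1 ≠ 0) (hf2 : f2 ≠ 0) (hne : f1 ≠ f2) (he : e ≠ 0)
    (hcount : ((f1 + g) ::ₘ (f2 - g) ::ₘ
      (replicate k f1 + replicate k f2 + {f1 + f2})).count e = k + 1) :
    g = 0 ∨ g = f2 - f1 := by
  set T := replicate k f1 + replicate k f2 + {f1 + f2}
  have hsum_ne_f1 : f1 + f2 ≠ f1 := fun h => hf2 (add_eq_left.mp h)
  have hsum_ne_f2 : f1 + f2 ≠ f2 := fun h => hf1 (add_eq_right.mp h)
  have he_mem : e = f1 ∨ e = f2 := by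
    by_contra! hef
    have hT : T.count e = if e = f1 + f2 then 1 else 0 := by
      simp [T, count_replicate, count_singleton, Ne.symm hef.1, Ne.symm hef.2]
    rw [count_cons, count_cons, hT] at hcount
    split_ifs at hcount with hs hb ha <;> try omega
    refine he (add_eq_left.mp (?_ : e + e = e))
    calc e + e = (f1 + g) + (f2 - g) := by rw [← ha, ← hb]
      _ = f1 + f2 := by abel
      _ = e := hs.symm
  have hTe : T.count e = k := by
    rcases he_mem with rfl | rfl
    · simp [T, count_replicate, hne.symm, hsum_ne_f1.symm]
    · simp [T, count_replicate, hne, hsum_ne_f2.symm]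
  rw [← hTe] at hcount
  rcases eq_or_eq_of_count_cons_cons hcount with h | h <;> rcases he_mem with rfl | rfl
  · exact Or.inl (add_eq_left.mp h)
  · exact Or.inr (eq_sub_of_add_eq' h)
  · exact Or.inr (by rw [← h]; abel)
  · exact Or.inl (sub_eq_self.mp h)

end

theorem stmt_10 (m : ℕ) (hm : 4 ≤ m)
    (f1 f2 : ZMod m × ZMod m) (hbasis : IsBasisPair m f1 f2)
    (S : Multiset (ZMod m × ZMod m))
    (hS : S = Multiset.replicate (m - 1) f1 + Multiset.replicate (m - 1) f2 +
        {f1 + f2})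
    (g : ZMod m × ZMod m)
    (h' : InUpsilon m ((f1 + g) ::ₘ (f2 - g) ::ₘ (S - {f1, f2}))) :
    (f1 + g) ::ₘ (f2 - g) ::ₘ (S - {f1, f2}) = S ∧ (g = 0 ∨ g = -f1 + f2) := by
  have hm1 : m ≠ 1 := by omega
  set T := replicate (m - 2) f1 + replicate (m - 2) f2 + {f1 + f2}
  have hST : S = f1 ::ₘ f2 ::ₘ T := by
    rw [hS, show m - 1 = m - 2 + 1 by omega, replicate_succ, replicate_succ, cons_add, cons_add,
      add_cons, cons_add]
  have hsub : S - {f1, f2} = T := by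
    rw [hST, ← singleton_add, ← singleton_add, ← add_assoc, insert_eq_cons, ← singleton_add,
      add_tsub_cancel_left]
  rw [hsub] at h' ⊢
  obtain ⟨e, he, hcount⟩ := h'.exists_count_eq hm1
  rcases eq_zero_or_eq_sub_of_count_eq (by omega : 2 ≤ m - 2) (hbasis.left_ne_zero hm1)
    (hbasis.right_ne_zero hm1) (hbasis.left_ne_right hm1) he
    (by rwa [show m - 1 = m - 2 + 1 by omega] at hcount) with rfl | rfl
  · exact ⟨by rw [add_zero, sub_zero, hST], Or.inl rfl⟩
  · refine ⟨?_, Or.inr (sub_eq_neg_add _ _)⟩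
    rw [add_sub_cancel, sub_sub_cancel, cons_swap, hST]
end

section
/- Let K = C_m ⊕ C_m with m ≥ 4, (f_1, f_2) a basis of K, S = f_1^{m−1} f_2^{m−1} (f_1 + f_2), and g ∈ K. If the sequence S' obtained from S by removing one copy of f_1 and the copy of f_1 + f_2 and adding f_1 + g and f_1 + f_2 − g lies in Υ(K), then g ∈ ⟨f_2⟩. -/
theorem stmt_11 (m : ℕ) (hm : 4 ≤ m)
    (f1 f2 : ZMod m × ZMod m) (hbasis : IsBasisPair m f1 f2)
    (S : Multiset (ZMod m × ZMod m))
    (hS : S = Multiset.replicate (m - 1) f1 + Multiset.replicate (m - 1) f2 +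
        {f1 + f2})
    (g : ZMod m × ZMod m)
    (h' : InUpsilon m ((f1 + g) ::ₘ (f1 + f2 - g) ::ₘ (S - {f1, f1 + f2}))) :
    g ∈ AddSubgroup.zmultiples f2 := by
  classical
  obtain ⟨hf1o, hf2o, hgen, hind⟩ := hbasis
  obtain ⟨hmin, e1, e2, ⟨he1o, he2o, hgen', hind'⟩, x, hxle, hxsum, hS'⟩ := h'
  have hf1ne0 : f1 ≠ 0 := by
    intro h; rw [h, addOrderOf_zero] at hf1o; omega
  have he2ne0 : e2 ≠ 0 := by
    intro h; rw [h, addOrderOf_zero] at he2o; omega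
  have hf12 : f1 ≠ f2 := by
    intro h
    have h0 : (1 : ℤ) • f1 + (-1 : ℤ) • f2 = 0 := by simp [h]
    have := (hind 1 (-1) h0).1
    simp only [one_smul] at this
    exact hf1ne0 this
  have hcoset : ∀ c : ℤ, c • e1 + e2 ≠ e1 := by
    intro c h
    have h0 : (c - 1) • e1 + (1 : ℤ) • e2 = (c • e1 + e2) - e1 := by
      rw [sub_smul, one_smul, one_smul]; abel
    rw [h, sub_self] at h0
    have := (hind' (c - 1) 1 h0).2
    rw [one_smul] at this
    exact he2ne0 this
  -- decompose S
  have hm2 : m - 1 = (m - 2) + 1 := by omega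
  have hSdec : S = ({f1, f1 + f2} : Multiset (ZMod m × ZMod m)) +
      (Multiset.replicate (m - 2) f1 + Multiset.replicate (m - 1) f2) := by
    have hrep : Multiset.replicate (m - 1) f1 = f1 ::ₘ Multiset.replicate (m - 2) f1 := by
      rw [hm2, Multiset.replicate_succ]
    rw [hS, hrep]
    simp only [Multiset.insert_eq_cons, ← Multiset.singleton_add]
    abel
  have hsub : S - {f1, f1 + f2} =
      Multiset.replicate (m - 2) f1 + Multiset.replicate (m - 1) f2 := by
    rw [hSdec, add_tsub_cancel_left]
  rw [hsub] at hS'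
  set T := (f1 + g) ::ₘ (f1 + f2 - g) ::ₘ
      (Multiset.replicate (m - 2) f1 + Multiset.replicate (m - 1) f2) with hT
  -- count formula for T
  have hcount : ∀ a : ZMod m × ZMod m, T.count a =
      (if a = f1 + g then 1 else 0) + (if a = f1 + f2 - g then 1 else 0) +
      ((if f1 = a then m - 2 else 0) + (if f2 = a then m - 1 else 0)) := by
    intro a
    rw [hT]
    rw [Multiset.count_cons, Multiset.count_cons, Multiset.count_add,
      Multiset.count_replicate, Multiset.count_replicate]
    omega
  -- count of e1 in T is m - 1
  have hmapE1 : e1 ∉ Multiset.map (fun ν => (x ν : ℤ) • e1 + e2)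
      (Finset.univ.val : Multiset (Fin m)) := by
    intro h
    obtain ⟨ν, -, hν⟩ := Multiset.mem_map.mp h
    exact hcoset (x ν) hν
  have hcountE1 : T.count e1 = m - 1 := by
    rw [hS', Multiset.count_add, Multiset.count_replicate, if_pos rfl,
      Multiset.count_eq_zero.mpr hmapE1, add_zero]
  -- every element of T is e1 or in the coset e2 + <e1>
  have hmem : ∀ a ∈ T, a = e1 ∨ ∃ c : ℤ, a = c • e1 + e2 := by
    intro a ha
    rw [hS'] at ha
    rcases Multiset.mem_add.mp ha with h | h
    · exact Or.inl (Multiset.eq_of_mem_replicate h)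
    · obtain ⟨ν, -, hν⟩ := Multiset.mem_map.mp h
      exact Or.inr ⟨(x ν : ℤ), hν.symm⟩
  have hf1T : f1 ∈ T := by
    rw [hT]
    refine Multiset.mem_cons_of_mem (Multiset.mem_cons_of_mem ?_)
    exact Multiset.mem_add.mpr (Or.inl (Multiset.mem_replicate.mpr ⟨by omega, rfl⟩))
  have hf2T : f2 ∈ T := by
    rw [hT]
    refine Multiset.mem_cons_of_mem (Multiset.mem_cons_of_mem ?_)
    exact Multiset.mem_add.mpr (Or.inr (Multiset.mem_replicate.mpr ⟨by omega, rfl⟩))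
  rcases hmem f1 hf1T with hA | ⟨c, hc⟩
  · rcases hmem f2 hf2T with hB | ⟨d, hd⟩
    · exact absurd (hA.trans hB.symm) hf12
    · -- f1 = e1, f2 in coset
      by_cases hg0 : g = 0
      · exact hg0 ▸ (AddSubgroup.zmultiples f2).zero_mem
      by_cases hgf2 : g = f2
      · exact AddSubgroup.mem_zmultiples_iff.mpr ⟨1, by rw [one_smul, hgf2]⟩
      exfalso
      rw [← hA] at hcountE1
      rw [hcount f1] at hcountE1
      rw [if_neg (fun h => hg0 (left_eq_add.mp h)),
        if_neg (fun h => hgf2 (by rwa [add_sub_assoc, left_eq_add, sub_eq_zero,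
          eq_comm] at h)),
        if_pos rfl, if_neg (fun h => hf12 h.symm)] at hcountE1
      omega
  · rcases hmem f2 hf2T with hB | ⟨d, hd⟩
    · -- f2 = e1, f1 in coset
      have hfgT : f1 + g ∈ T := by rw [hT]; exact Multiset.mem_cons_self _ _
      rcases hmem (f1 + g) hfgT with h1 | ⟨c', hc'⟩
      · -- f1 + g = e1 = f2 : count contradiction
        exfalso
        rw [← hB] at hcountE1
        rw [hcount f2] at hcountE1
        rw [if_pos (hB.trans h1.symm), if_neg hf12, if_pos rfl] at hcountE1
        split_ifs at hcountE1 <;> omega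
      · have hg : g = (c' - c) • e1 := by
          have h2 : g = (c' • e1 + e2) - (c • e1 + e2) := by
            rw [← hc', ← hc]; abel
          rw [h2, sub_smul]; abel
        exact AddSubgroup.mem_zmultiples_iff.mpr ⟨c' - c, by rw [hB, hg]⟩
    · -- both f1 and f2 in coset: e1 ≠ f1, e1 ≠ f2, count e1 ≤ 2 < m - 1
      exfalso
      have hne1 : f1 ≠ e1 := fun h => hcoset c (hc.symm.trans h)
      have hne2 : f2 ≠ e1 := fun h => hcoset d (hd.symm.trans h)
      rw [hcount e1, if_neg hne1, if_neg hne2] at hcountE1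
      split_ifs at hcountE1 <;> omega
end

section
/- Let K = C_m ⊕ C_m with m ≥ 4, (f_1, f_2) a basis of K, S = f_1^{m−1} f_2^{m−1} (f_1 + f_2), and g ∈ K. If the sequence S' obtained from S by removing two copies of f_1 and adding f_1 + g and f_1 − g lies in Υ_{nu}(K), then g = 0 and hence S' = S. -/
theorem stmt_12 (m : ℕ) (hm : 4 ≤ m)
    (f1 f2 : ZMod m × ZMod m) (hbasis : IsBasisPair m f1 f2)
    (S : Multiset (ZMod m × ZMod m))
    (hS : S = Multiset.replicate (m - 1) f1 + Multiset.replicate (m - 1) f2 +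
        {f1 + f2})
    (g : ZMod m × ZMod m)
    (h' : InUpsilonNU m ((f1 + g) ::ₘ (f1 - g) ::ₘ (S - Multiset.replicate 2 f1))) :
    g = 0 ∧ (f1 + g) ::ₘ (f1 - g) ::ₘ (S - Multiset.replicate 2 f1) = S := by
  obtain ⟨ho1, ho2, hgen, hind⟩ := hbasis
  obtain ⟨⟨hne0, hsum, hmin⟩, -⟩ := h'.1
  have hnu := h'.2
  have hf1 : f1 ≠ 0 := by
    intro h; rw [h, addOrderOf_zero] at ho1; omega
  have hf2 : f2 ≠ 0 := by
    intro h; rw [h, addOrderOf_zero] at ho2; omega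
  have h12 : f1 ≠ f2 := by
    intro h
    have := (hind 1 (-1) (by simp [h])).1
    simp at this
    exact hf1 this
  have hf1f12 : f1 ≠ f1 + f2 := fun h => hf2 (left_eq_add.mp h)
  have hf2f12 : f2 ≠ f1 + f2 := by
    intro h
    rw [add_comm] at h
    exact hf1 (left_eq_add.mp h)
  have key : ∀ a : ZMod m × ZMod m,
      Multiset.count a ((f1 + g) ::ₘ (f1 - g) ::ₘ (S - Multiset.replicate 2 f1)) =
      (if a = f1 + g then 1 else 0) + (if a = f1 - g then 1 else 0) +
      (((if f1 = a then m - 1 else 0) + (if f2 = a then m - 1 else 0) +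
        (if a = f1 + f2 then 1 else 0)) - (if f1 = a then 2 else 0)) := by
    intro a
    rw [hS]
    simp only [Multiset.count_cons, Multiset.count_sub, Multiset.count_add,
      Multiset.count_replicate, Multiset.count_singleton]
    split_ifs <;> omega
  have count_f2 : Multiset.count f2
      ((f1 + g) ::ₘ (f1 - g) ::ₘ (S - Multiset.replicate 2 f1)) =
      (if f2 = f1 + g then 1 else 0) + (if f2 = f1 - g then 1 else 0) + (m - 1) := by
    rw [key, if_neg h12, if_neg h12, if_pos rfl, if_neg hf2f12]
    split_ifs <;> omega
  have hg : g = 0 := by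
    by_contra hg0
    have e_g1 : f1 ≠ f1 + g := fun h => hg0 (left_eq_add.mp h)
    have e_g2 : f1 ≠ f1 - g := by
      intro h
      apply hg0
      have h2 : f1 + g = f1 := by rw [eq_sub_iff_add_eq] at h; exact h
      exact add_eq_left.mp h2
    have count_f1 : Multiset.count f1
        ((f1 + g) ::ₘ (f1 - g) ::ₘ (S - Multiset.replicate 2 f1)) = m - 3 := by
      rw [key, if_neg e_g1, if_neg e_g2, if_pos rfl, if_pos rfl,
        if_neg (Ne.symm h12), if_neg hf1f12]
      omega
    by_cases hA : f1 + g = f2 ∨ f1 - g = f2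
    · -- f2 occurs ≥ m times: f2^m is a proper nonempty zero-sum subsequence
      have hle : Multiset.replicate m f2 ≤
          (f1 + g) ::ₘ (f1 - g) ::ₘ (S - Multiset.replicate 2 f1) := by
        rw [Multiset.le_iff_count]
        intro b
        rw [Multiset.count_replicate]
        split_ifs with hb
        · subst hb
          rw [count_f2]
          rcases hA with h | h
          · rw [if_pos h.symm]; split_ifs <;> omega
          · rw [if_pos h.symm]; split_ifs <;> omega
        · exact Nat.zero_le _
      have hT0 : Multiset.replicate m f2 ≠ 0 := by
        intro h
        have hc := congrArg Multiset.card h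
        rw [Multiset.card_replicate, Multiset.card_zero] at hc
        omega
      have hTS : Multiset.replicate m f2 ≠
          (f1 + g) ::ₘ (f1 - g) ::ₘ (S - Multiset.replicate 2 f1) := by
        intro h
        have hc := congrArg (Multiset.count f1) h
        rw [Multiset.count_replicate, if_neg (Ne.symm h12), count_f1] at hc
        omega
      apply hmin _ hle hT0 hTS
      rw [Multiset.sum_replicate]
      have h0 : addOrderOf f2 • f2 = 0 := addOrderOf_nsmul_eq_zero f2
      rwa [ho2] at h0
    · -- f2 is the unique element of multiplicity m - 1
      push_neg at hA
      obtain ⟨hA1, hA2⟩ := hA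
      apply hnu
      refine ⟨f2, ?_, ?_⟩
      · show Multiset.count f2
          ((f1 + g) ::ₘ (f1 - g) ::ₘ (S - Multiset.replicate 2 f1)) = m - 1
        rw [count_f2, if_neg (Ne.symm hA1), if_neg (Ne.symm hA2)]
        omega
      · intro a ha
        by_contra haf2
        rcases eq_or_ne a f1 with rfl | haf1
        · rw [count_f1] at ha
          omega
        · rw [key, if_neg (Ne.symm haf1), if_neg (Ne.symm haf1),
            if_neg (Ne.symm haf2)] at ha
          split_ifs at ha with h1 h2 h3 <;> try omega
          -- h1 : a = f1 + g, h2 : a = f1 - g, h3 : a = f1 + f2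
          have hgf2 : g = f2 := by rw [h1] at h3; exact add_left_cancel h3
          have hngf2 : -g = f2 := by
            rw [h2, sub_eq_add_neg] at h3; exact add_left_cancel h3
          have hgg : g = -g := by rw [hngf2, ← hgf2]
          have h2f2 : (2 : ℕ) • f2 = 0 := by
            rw [← hgf2, two_nsmul]
            exact add_eq_zero_iff_eq_neg.mpr hgg
          have hd := addOrderOf_dvd_iff_nsmul_eq_zero.mpr h2f2
          rw [ho2] at hd
          have := Nat.le_of_dvd (by norm_num) hd
          omega
  refine ⟨hg, ?_⟩
  subst hg
  simp only [add_zero, sub_zero]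
  have h2le : Multiset.replicate 2 f1 ≤ S := by
    rw [hS, Multiset.le_iff_count]
    intro b
    rw [Multiset.count_replicate]
    split_ifs with hb
    · subst hb
      simp only [Multiset.count_add, Multiset.count_replicate,
        Multiset.count_singleton]
      split_ifs <;> omega
    · exact Nat.zero_le _
  have hrepr : (f1 ::ₘ f1 ::ₘ (S - Multiset.replicate 2 f1)) =
      Multiset.replicate 2 f1 + (S - Multiset.replicate 2 f1) := by
    simp [Multiset.replicate_succ, Multiset.cons_add]
  rw [hrepr, add_comm, tsub_add_cancel_of_le h2le]
end

section
/- Let G = C_n ⊕ C_n with n ≥ 2. The following are equivalent: (b) every zero-sum free sequence S over G of length 2n−2 satisfies a^{n−2} | S for some a ∈ G; (c) every minimal zero-sum sequence S over G of length 2n−1 satisfies a^{n−1} | S for some a ∈ G. -/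
open Multiset

section ZeroSum

variable {G : Type*} [AddCommGroup G]

def ZeroSumFree (S : Multiset G) : Prop :=
  ∀ T ≤ S, T ≠ 0 → T.sum ≠ 0

theorem IsMinZeroSum.zeroSumFree_of_lt {S T : Multiset G} (hS : IsMinZeroSum S) (hT : T < S) :
    ZeroSumFree T := fun U hU hU0 =>
  hS.2.2 U (hU.trans hT.le) hU0 (hU.trans_lt hT).ne

theorem ZeroSumFree.isMinZeroSum_neg_sum_cons {S : Multiset G} (hS : ZeroSumFree S) :
    IsMinZeroSum (-S.sum ::ₘ S) := by
  classical
  refine ⟨cons_ne_zero, by simp, fun T hT hT0 hTS hTsum => ?_⟩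
  generalize hg_def : -S.sum = g at hT hTS
  by_cases hg : g ∈ T
  · obtain ⟨D, hD⟩ := Multiset.le_iff_exists_add.1 (erase_le_iff_le_cons.2 hT)
    refine hS D (hD ▸ le_add_left le_rfl) (fun hD0 => hTS ?_) ?_
    · rw [hD, hD0, add_zero, cons_erase hg]
    · have hsum := congrArg Multiset.sum hD
      rw [sum_add, ← add_right_inj g, ← add_assoc, sum_erase hg, hTsum, ← hg_def] at hsum
      simpa using hsum.symm
  · exact hS T ((le_cons_of_notMem hg).1 hT) hT0 hTsum

theorem ZeroSumFree.exists_replicate_le {m k : ℕ}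
    (hC : ∀ S : Multiset G, IsMinZeroSum S → card S = m + 1 → ∃ a, replicate (k + 1) a ≤ S)
    {S : Multiset G} (hS : ZeroSumFree S) (hcard : card S = m) : ∃ a, replicate k a ≤ S := by
  classical
  obtain ⟨a, ha⟩ := hC _ hS.isMinZeroSum_neg_sum_cons (by simp [hcard])
  refine ⟨a, le_count_iff_replicate_le.1 ?_⟩
  have := le_count_iff_replicate_le.2 ha
  rw [count_cons] at this
  split_ifs at this <;> omega

end ZeroSum

namespace Multiset

variable {α : Type*} [DecidableEq α]

theorem exists_ne_count_eq_of_replicate_le_erase {k : ℕ} {S : Multiset α} {u : α} (hu : u ∈ S)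
    (hcount : ∀ a, count a S ≤ k) (h : ∃ a, replicate k a ≤ S.erase u) :
    ∃ a ≠ u, count a S = k := by
  obtain ⟨a, ha⟩ := h
  have hle := le_count_iff_replicate_le.2 ha
  by_cases hau : a = u
  · subst hau
    have := count_pos.2 hu
    rw [count_erase_self] at hle
    have := hcount a
    omega
  · rw [count_erase_of_ne hau] at hle
    exact ⟨a, hau, le_antisymm (hcount a) hle⟩

theorem exists_eq_replicate_add_replicate_add {k : ℕ} {S : Multiset α} {a b : α} (hab : a ≠ b)
    (ha : count a S = k) (hb : count b S = k) :
    ∃ R, S = replicate k a + replicate k b + R ∧ a ∉ R ∧ b ∉ R := by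
  have hle : replicate k a + replicate k b ≤ S := by
    rw [Multiset.le_iff_count]
    intro x
    rw [count_add, count_replicate, count_replicate]
    split_ifs <;> simp_all
  obtain ⟨R, hR⟩ := Multiset.le_iff_exists_add.1 hle
  refine ⟨R, hR, fun haR => ?_, fun hbR => ?_⟩
  · have hcount := congrArg (count a) hR
    simp only [count_add, count_replicate_self, count_replicate, hab.symm, if_false, ha] at hcount
    have := count_pos.2 haR
    omega
  · have hcount := congrArg (count b) hR
    simp only [count_add, count_replicate_self, count_replicate, hab, if_false, hb] at hcount
    have := count_pos.2 hbR
    omega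

end Multiset

theorem ZMod.val_le_sub_two {n : ℕ} [NeZero n] {x : ZMod n} (hx : x ≠ -1) : x.val ≤ n - 2 := by
  obtain ⟨m, rfl⟩ : ∃ m, n = m + 1 := ⟨n - 1, by have := NeZero.ne n; omega⟩
  have hlt := x.val_lt
  have hne : x.val ≠ m := fun h => hx (ZMod.val_injective _ (h.trans (ZMod.val_neg_one m).symm))
  omega

theorem ZMod.val_nsmul {n : ℕ} [NeZero n] {G : Type*} [AddCommGroup G] [Module (ZMod n) G]
    (x : ZMod n) (a : G) : x.val • a = x • a := by
  rw [← Nat.cast_smul_eq_nsmul (ZMod n), ZMod.natCast_zmod_val]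

theorem one_zero_mem_or_zero_one_mem_of_sum_eq_two {R : Type*} [CommRing R] [Nontrivial R]
    {P : Multiset (R × R)} (hcard : card P = 3) (hP : ∀ p ∈ P, p.1 = 1 ∨ p.2 = 1)
    (hsum : P.sum = (2, 2)) : (1, 0) ∈ P ∨ (0, 1) ∈ P := by
  obtain ⟨⟨x₁, y₁⟩, ⟨x₂, y₂⟩, ⟨x₃, y₃⟩, rfl⟩ := card_eq_three.1 hcard
  simp only [insert_eq_cons, mem_cons, mem_singleton, forall_eq_or_imp, forall_eq, sum_cons,
    sum_singleton, Prod.mk_add_mk, Prod.mk.injEq] at hP hsum ⊢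
  obtain ⟨h₁ | h₁, h₂ | h₂, h₃ | h₃⟩ := hP <;> grind

section ModuleZMod

variable {n : ℕ} {G : Type*} [AddCommGroup G] [Module (ZMod n) G]

theorem ZeroSumFree.eq_zero_of_smul_add_smul_add_sum_eq_zero [NeZero n] {a b : G}
    {T : Multiset G} (h : ZeroSumFree (replicate (n - 2) a + replicate (n - 2) b + T))
    {x y : ZMod n} (hx : x ≠ -1) (hy : y ≠ -1) (hsum : x • a + y • b + T.sum = 0) :
    x = 0 ∧ y = 0 ∧ T = 0 := by
  by_contra hne
  refine h (replicate x.val a + replicate y.val b + T) ?_ (fun h0 => hne ?_) ?_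
  · gcongr
    exacts [ZMod.val_le_sub_two hx, ZMod.val_le_sub_two hy]
  · simpa [ZMod.val_eq_zero, and_assoc] using congrArg card h0
  · simpa [sum_replicate, ZMod.val_nsmul] using hsum

theorem ZeroSumFree.smul_add_smul_eq_zero (hn : 2 < n) {a b : G} (hab : a ≠ b)
    (h : ZeroSumFree (replicate (n - 2) a + replicate (n - 2) b)) {x y : ZMod n}
    (hxy : x • a + y • b = 0) : x = 0 ∧ y = 0 := by
  have : Fact (2 < n) := ⟨hn⟩
  have : NeZero n := ⟨by omega⟩
  rw [← add_zero (_ + _)] at h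
  by_cases hx : x ≠ -1 ∧ y ≠ -1
  · exact (h.eq_zero_of_smul_add_smul_add_sum_eq_zero hx.1 hx.2 (by simpa using hxy)).imp_right
      And.left
  by_cases hx' : x ≠ 1 ∧ y ≠ 1
  · have := h.eq_zero_of_smul_add_smul_add_sum_eq_zero (x := -x) (y := -y)
      (by simpa using hx'.1) (by simpa using hx'.2)
      (by rw [sum_zero, add_zero, neg_smul, neg_smul, ← neg_add, hxy, neg_zero])
    simpa using this
  -- otherwise `{x, y} = {1, -1}`, and `x • a + y • b = 0` says `a = b`
  exfalso
  have hne := ZMod.neg_one_ne_one (n := n)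
  rw [not_and_or, not_not, not_not] at hx hx'
  rcases hx with rfl | rfl
  · obtain rfl := hx'.resolve_left hne
    exact hab (by simpa [neg_add_eq_zero] using hxy)
  · obtain rfl := hx'.resolve_right hne
    exact hab (by simpa [add_neg_eq_zero] using hxy)

theorem ZeroSumFree.eq_one_or_eq_one [NeZero n] {a b c : G}
    (h : ZeroSumFree (replicate (n - 2) a + replicate (n - 2) b + {c})) {x y : ZMod n}
    (hc : x • a + y • b = c) : x = 1 ∨ y = 1 := by
  by_contra! hxy
  have := h.eq_zero_of_smul_add_smul_add_sum_eq_zero (x := -x) (y := -y)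
    (by simpa using hxy.1) (by simpa using hxy.2) (by rw [sum_singleton, ← hc]; module)
  exact singleton_ne_zero c this.2.2

end ModuleZMod

theorem not_isMinZeroSum_replicate_add_replicate_add {n : ℕ} (hn : 2 < n)
    {a b : ZMod n × ZMod n} (hab : a ≠ b) {R : Multiset (ZMod n × ZMod n)} (hR : card R = 3)
    (ha : a ∉ R) (hb : b ∉ R) :
    ¬ IsMinZeroSum (replicate (n - 2) a + replicate (n - 2) b + R) := by
  intro hS
  have : NeZero n := ⟨by omega⟩
  have : Fact (1 < n) := ⟨by omega⟩
  have hfree_ab : ZeroSumFree (replicate (n - 2) a + replicate (n - 2) b) :=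
    hS.zeroSumFree_of_lt (lt_add_of_pos_right _ (pos_iff_ne_zero.2 (card_pos.1 (by omega))))
  have hfree_c (c : ZMod n × ZMod n) (hc : c ∈ R) :
      ZeroSumFree (replicate (n - 2) a + replicate (n - 2) b + {c}) :=
    hS.zeroSumFree_of_lt (add_lt_add_right (lt_of_le_of_ne (singleton_le.2 hc)
      fun h => by simp [← h] at hR) _)
  -- `a` and `b` form a basis, so `R` can be read in coordinates
  let f := (LinearMap.toSpanSingleton (ZMod n) _ a).coprod (LinearMap.toSpanSingleton _ _ b)
  have hinj : Function.Injective f := (injective_iff_map_eq_zero f).2 fun p hp =>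
    Prod.ext_iff.2 (hfree_ab.smul_add_smul_eq_zero hn hab hp)
  let e := LinearEquiv.ofBijective f ⟨hinj, Finite.injective_iff_surjective.1 hinj⟩
  have he (p : ZMod n × ZMod n) : e p = p.1 • a + p.2 • b := rfl
  have hcoord : ∀ p ∈ R.map e.symm, p.1 = 1 ∨ p.2 = 1 := by
    rintro _ hp
    obtain ⟨c, hc, rfl⟩ := mem_map.1 hp
    exact (hfree_c c hc).eq_one_or_eq_one (by rw [← he, e.apply_symm_apply])
  have hRsum : R.sum = e (2, 2) := by
    have h0 := hS.2.1
    rw [sum_add, sum_add, sum_replicate, sum_replicate, ← Nat.cast_smul_eq_nsmul (ZMod n),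
      ← Nat.cast_smul_eq_nsmul (ZMod n), Nat.cast_sub hn.le, ZMod.natCast_self] at h0
    rw [he]
    linear_combination (norm := module) h0
  have hsum : (R.map e.symm).sum = (2, 2) := by
    rw [← map_multiset_sum, hRsum, e.symm_apply_apply]
  have hmem (p : ZMod n × ZMod n) (hp : p ∈ R.map e.symm) : e p ∈ R := by
    obtain ⟨c, hc, rfl⟩ := mem_map.1 hp
    rwa [e.apply_symm_apply]
  rcases one_zero_mem_or_zero_one_mem_of_sum_eq_two (by simpa using hR) hcoord hsum with h | h
  · exact ha (by simpa [he] using hmem _ h)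
  · exact hb (by simpa [he] using hmem _ h)

theorem exists_replicate_le_of_isMinZeroSum {n : ℕ} (hn : 2 ≤ n)
    (hB : ∀ S : Multiset (ZMod n × ZMod n), ZeroSumFree S → card S = 2 * n - 2 →
      ∃ a, replicate (n - 2) a ≤ S)
    {S : Multiset (ZMod n × ZMod n)} (hS : IsMinZeroSum S) (hcard : card S = 2 * n - 1) :
    ∃ a, replicate (n - 1) a ≤ S := by
  classical
  obtain ⟨u, hu⟩ := exists_mem_of_ne_zero hS.1
  rcases hn.eq_or_lt with rfl | hn
  · exact ⟨u, by simpa using hu⟩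
  by_contra! hcon
  have hcount (a : ZMod n × ZMod n) : count a S ≤ n - 2 := by
    by_contra! h
    exact hcon a (le_count_iff_replicate_le.1 (by omega))
  have hB' (v : ZMod n × ZMod n) (hv : v ∈ S) : ∃ a, replicate (n - 2) a ≤ S.erase v :=
    hB _ (hS.zeroSumFree_of_lt (erase_lt.2 hv))
      (by rw [card_erase_of_mem hv, hcard, Nat.pred_eq_sub_one]; omega)
  obtain ⟨a, -, ha⟩ := exists_ne_count_eq_of_replicate_le_erase hu hcount (hB' u hu)
  have haS : a ∈ S := count_pos.1 (by omega)
  obtain ⟨b, hba, hb⟩ := exists_ne_count_eq_of_replicate_le_erase haS hcount (hB' a haS)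
  obtain ⟨R, rfl, haR, hbR⟩ := exists_eq_replicate_add_replicate_add hba.symm ha hb
  refine not_isMinZeroSum_replicate_add_replicate_add hn hba.symm ?_ haR hbR hS
  simp only [card_add, card_replicate] at hcard
  omega

theorem stmt_14 (n : ℕ) (hn : 2 ≤ n) :
    (∀ S : Multiset (ZMod n × ZMod n),
        (∀ T ≤ S, T ≠ 0 → T.sum ≠ 0) → Multiset.card S = 2 * n - 2 →
        ∃ a : ZMod n × ZMod n, Multiset.replicate (n - 2) a ≤ S) ↔
    (∀ S : Multiset (ZMod n × ZMod n),
        IsMinZeroSum S → Multiset.card S = 2 * n - 1 →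
        ∃ a : ZMod n × ZMod n, Multiset.replicate (n - 1) a ≤ S) := by
  refine ⟨fun hB S hS hcard => exists_replicate_le_of_isMinZeroSum hn hB hS hcard,
    fun hC S hS hcard => ?_⟩
  rw [show 2 * n - 1 = 2 * n - 2 + 1 by omega, show n - 1 = n - 2 + 1 by omega] at hC
  exact ZeroSumFree.exists_replicate_le hC hS hcard
end

section
/- Let G = C_n ⊕ C_n with n ≥ 2, and suppose every minimal zero-sum sequence over G of length 2n−1 contains some element with multiplicity n−1. Then every minimal zero-sum sequence S over G of length 2n−1 has the form S = e_1^{n−1} ∏_{ν=1}^{n} (x_ν e_1 + e_2) for some basis (e_1, e_2) of G and integers x_1, …, x_n ∈ [0, n−1] with x_1 + … + x_n ≡ 1 (mod n). -/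
open Multiset

namespace Multiset

variable {α β : Type*}

theorem exists_le_map_eq {f : α → β} {T : Multiset α} {U : Multiset β} (h : U ≤ T.map f) :
    ∃ V ≤ T, V.map f = U := by
  obtain ⟨l, rfl⟩ : ∃ l : List α, (l : Multiset α) = T := Quot.exists_rep T
  obtain ⟨k, rfl⟩ : ∃ k : List β, (k : Multiset β) = U := Quot.exists_rep U
  obtain ⟨k', hperm, hsub⟩ := h
  obtain ⟨l', hl', rfl⟩ := List.sublist_map_iff.1 hsub
  exact ⟨l', hl'.subperm, Quot.sound hperm⟩

theorem exists_eq_map_univ_fin {n : ℕ} {T : Multiset α} (h : card T = n) :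
    ∃ y : Fin n → α, T = Finset.univ.val.map y := by
  obtain ⟨l, rfl⟩ : ∃ l : List α, (l : Multiset α) = T := Quot.exists_rep T
  obtain rfl : l.length = n := h
  exact ⟨fun i => l[(i : ℕ)], by rw [Fin.univ_val_map, List.ofFn_getElem]⟩

end Multiset

namespace IsMinZeroSum

variable {G : Type*} [AddCommGroup G] {S : Multiset G}

theorem eq_of_le (hS : IsMinZeroSum S) {T : Multiset G} (hT : T ≤ S) (hT0 : T ≠ 0)
    (hsum : T.sum = 0) : T = S := by
  by_contra hne
  exact hS.2.2 T hT hT0 hne hsum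

theorem lt_addOrderOf [Finite G] (hS : IsMinZeroSum S) {g : G} {k : ℕ}
    (hk : replicate k g ≤ S) (hkS : k < card S) : k < addOrderOf g := by
  by_contra! hle
  have hsub : replicate (addOrderOf g) g ≤ S := ((replicate_le_replicate g).2 hle).trans hk
  have hne : replicate (addOrderOf g) g ≠ 0 := by
    rw [Ne, ← card_eq_zero, card_replicate]
    exact (addOrderOf_pos g).ne'
  have h := congrArg card (hS.eq_of_le hsub hne (by simp))
  rw [card_replicate] at h
  omega

theorem injective_sum_take (hS : IsMinZeroSum S) {L : List G} (hL : (L : Multiset G) = S) :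
    Function.Injective fun i : Fin (card S) => (L.take i).sum := by
  have hlen : L.length = card S := by rw [← hL, coe_card]
  have key : ∀ i j : ℕ, i < j → j < L.length → (L.take i).sum ≠ (L.take j).sum := by
    intro i j hij hj heq
    set D := (L.drop i).take (j - i)
    have hDlen : D.length = j - i := by simp only [D, List.length_take, List.length_drop]; omega
    have hDsum : D.sum = 0 := by
      have h := congrArg List.sum (List.take_add (l := L) (i := i) (j := j - i))
      rw [Nat.add_sub_cancel' hij.le, List.sum_append, ← heq] at h
      exact left_eq_add.mp h
    have hDS : (D : Multiset G) = S :=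
      hS.eq_of_le (hL ▸ ((List.take_sublist _ _).trans (List.drop_sublist _ _)).subperm)
        (by rw [Ne, coe_eq_zero, ← List.length_eq_zero_iff]; omega) (by rwa [sum_coe])
    have := congrArg card hDS
    rw [coe_card] at this
    omega
  intro i j h
  rcases lt_trichotomy i j with hij | hij | hij
  · exact absurd h (key i j hij (by omega))
  · exact hij
  · exact absurd h.symm (key j i hij (by omega))

theorem exists_addOrderOf_eq_replicate [Finite G] (hS : IsMinZeroSum S)
    (hcard : card S = Nat.card G) :
    ∃ c : G, addOrderOf c = Nat.card G ∧ S = replicate (Nat.card G) c := by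
  classical
  suffices h : ∀ x ∈ S, ∀ y ∈ S, x = y by
    obtain ⟨c, hc⟩ := exists_mem_of_ne_zero hS.1
    have hS' : S = replicate (Nat.card G) c := eq_replicate.2 ⟨hcard, fun b hb => h b hb c hc⟩
    refine ⟨c, le_antisymm (Nat.le_of_dvd Nat.card_pos (addOrderOf_dvd_natCard c)) ?_, hS'⟩
    have hpos := Nat.card_pos (α := G)
    have := hS.lt_addOrderOf (g := c) (k := Nat.card G - 1)
      (hS' ▸ (replicate_le_replicate c).2 (Nat.sub_le _ 1)) (by omega)
    omega
  intro x hx y hy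
  by_contra hxy
  have hy' : y ∈ S.erase x := (mem_erase_of_ne (Ne.symm hxy)).2 hy
  set R := ((S.erase x).erase y).toList
  have hL₁ : ((x :: y :: R : List G) : Multiset G) = S := by
    rw [← cons_coe, ← cons_coe, coe_toList, cons_erase hy', cons_erase hx]
  have hL₂ : ((y :: x :: R : List G) : Multiset G) = S :=
    hL₁ ▸ coe_eq_coe.2 (List.Perm.swap x y R)
  have h1 : 1 < card S := by rw [← hL₁, coe_card]; simp
  have hswap : ∀ k : ℕ, k ≠ 1 → ((y :: x :: R).take k).sum = ((x :: y :: R).take k).sum := by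
    rintro (_ | _ | k) hk
    · rfl
    · exact absurd rfl hk
    · simp [add_left_comm]
  have hsurj := (Finite.injective_iff_surjective_of_equiv
    ((finCongr hcard).trans (Finite.equivFin G).symm)).1 (hS.injective_sum_take hL₁)
  obtain ⟨i, hi⟩ := hsurj y
  by_cases hi1 : (i : ℕ) = 1
  · exact hxy (by simpa [hi1] using hi)
  · have := hS.injective_sum_take hL₂ (a₁ := i) (a₂ := ⟨1, h1⟩) (by simpa [hswap i hi1])
    exact hi1 (congrArg Fin.val this)

theorem map_mk_zmultiples [Finite G] {n : ℕ} {e : G} {T : Multiset G}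
    (hS : IsMinZeroSum (replicate (n - 1) e + T)) (he : addOrderOf e = n) (hT : T ≠ 0) :
    IsMinZeroSum (T.map (QuotientAddGroup.mk' (AddSubgroup.zmultiples e))) := by
  classical
  refine ⟨by simpa using hT, ?_, fun U' hU' hU'0 hne hU'sum => hne ?_⟩
  · have h := hS.2.1
    rw [sum_add, sum_replicate, add_eq_zero_iff_neg_eq] at h
    rw [← map_multiset_sum, ← h, QuotientAddGroup.mk'_apply, QuotientAddGroup.eq_zero_iff]
    exact neg_mem (AddSubgroup.nsmul_mem_zmultiples e _)
  obtain ⟨U, hUT, rfl⟩ := exists_le_map_eq hU'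
  suffices U = T by rw [this]
  have hU0 : U ≠ 0 := by rintro rfl; exact hU'0 (map_zero _)
  have hUsum : -U.sum ∈ AddSubgroup.zmultiples e := by
    rw [← map_multiset_sum, QuotientAddGroup.mk'_apply, QuotientAddGroup.eq_zero_iff] at hU'sum
    exact neg_mem hU'sum
  obtain ⟨m, hm, hme⟩ := Finset.mem_image.1 (mem_zmultiples_iff_mem_range_addOrderOf.1 hUsum)
  rw [Finset.mem_range, he] at hm
  -- `U` topped up with `m` copies of `e` is a zero-sum subsequence, hence the whole sequence
  have hV := hS.eq_of_le (add_comm U _ ▸ add_le_add ((replicate_le_replicate e).2 (by omega)) hUT)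
    (by simp [hU0]) (by rw [sum_add, sum_replicate, hme, add_neg_cancel])
  have := congrArg card hV
  simp only [card_add, card_replicate] at this
  exact eq_of_le_of_card_le hUT (by omega)

end IsMinZeroSum

section ZMultiplesQuotient

variable {G : Type*} [AddCommGroup G] [Finite G] {n : ℕ}

theorem natCard_quotient_zmultiples (hG : Nat.card G = n * n) {e : G} (he : addOrderOf e = n) :
    Nat.card (G ⧸ AddSubgroup.zmultiples e) = n := by
  have h := (AddSubgroup.zmultiples e).card_eq_card_quotient_mul_card_addSubgroup
  rw [Nat.card_zmultiples, he, hG] at h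
  have hn : 0 < n := Nat.pos_of_mul_pos_left (hG ▸ Nat.card_pos)
  exact (Nat.eq_of_mul_eq_mul_right hn h).symm

theorem isBasisPair_of_addOrderOf_mk (hG : Nat.card G = n * n) (hexp : ∀ g : G, n • g = 0)
    {e₁ e₂ : G} (he₁ : addOrderOf e₁ = n)
    (he₂ : addOrderOf (e₂ : G ⧸ AddSubgroup.zmultiples e₁) = n) : IsBasisPair n e₁ e₂ := by
  have he₂' : addOrderOf e₂ = n := Nat.dvd_antisymm (addOrderOf_dvd_of_nsmul_eq_zero (hexp e₂))
    (he₂ ▸ addOrderOf_map_dvd (QuotientAddGroup.mk' _) e₂)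
  have htop : AddSubgroup.zmultiples (e₂ : G ⧸ AddSubgroup.zmultiples e₁) = ⊤ :=
    AddSubgroup.eq_top_of_card_eq _ <| by
      rw [Nat.card_zmultiples, he₂, natCard_quotient_zmultiples hG he₁]
  refine ⟨he₁, he₂', fun g => ?_, fun x y h => ?_⟩
  · obtain ⟨y, hy⟩ := AddSubgroup.mem_zmultiples_iff.1 (htop ▸ AddSubgroup.mem_top (g : G ⧸ _))
    rw [← QuotientAddGroup.mk_zsmul, QuotientAddGroup.eq] at hy
    obtain ⟨x, hx⟩ := AddSubgroup.mem_zmultiples_iff.1 hy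
    exact ⟨x, y, by rw [hx]; abel⟩
  · have hy : y • (e₂ : G ⧸ AddSubgroup.zmultiples e₁) = 0 := by
      have := congrArg (QuotientAddGroup.mk' (AddSubgroup.zmultiples e₁)) h
      simpa [(QuotientAddGroup.eq_zero_iff _).2 (AddSubgroup.mem_zmultiples e₁)] using this
    rw [← addOrderOf_dvd_iff_zsmul_eq_zero, he₂, ← he₂', addOrderOf_dvd_iff_zsmul_eq_zero] at hy
    rw [hy, add_zero] at h
    exact ⟨h, hy⟩

theorem exists_eq_map_zsmul_add {m : ℕ} {e₁ e₂ : G} {T : Multiset G} (hT : card T = m)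
    (hcoset : ∀ t ∈ T, -e₂ + t ∈ AddSubgroup.zmultiples e₁) :
    ∃ x : Fin m → ℕ, (∀ ν, x ν < addOrderOf e₁) ∧
      T = map (fun ν => (x ν : ℤ) • e₁ + e₂) Finset.univ.val := by
  classical
  have hrep : ∀ t ∈ T, ∃ k < addOrderOf e₁, t = (k : ℤ) • e₁ + e₂ := by
    intro t ht
    obtain ⟨k, hk, hke⟩ :=
      Finset.mem_image.1 (mem_zmultiples_iff_mem_range_addOrderOf.1 (hcoset t ht))
    refine ⟨k, Finset.mem_range.1 hk, ?_⟩
    rw [natCast_zsmul, hke]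
    abel
  obtain ⟨y, rfl⟩ := exists_eq_map_univ_fin hT
  choose x hx hxy using fun ν => hrep (y ν) (mem_map_of_mem _ (Finset.mem_univ_val ν))
  exact ⟨x, hx, map_congr rfl fun ν _ => hxy ν⟩

end ZMultiplesQuotient

theorem IsMinZeroSum.exists_isBasisPair_of_count_eq {G : Type*} [AddCommGroup G] [Finite G]
    [DecidableEq G] {n : ℕ} (hG : Nat.card G = n * n) (hexp : ∀ g : G, n • g = 0) {S : Multiset G}
    (hS : IsMinZeroSum S) (hlen : card S = 2 * n - 1) {e₁ : G} (hc : S.count e₁ = n - 1) :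
    ∃ e₂ : G, IsBasisPair n e₁ e₂ ∧
      ∃ x : Fin n → ℕ, (∀ ν, x ν ≤ n - 1) ∧ (∑ ν, x ν) ≡ 1 [MOD n] ∧
        S = replicate (n - 1) e₁ + map (fun ν => (x ν : ℤ) • e₁ + e₂) Finset.univ.val := by
  obtain ⟨T, rfl⟩ := Multiset.le_iff_exists_add.1 (le_count_iff_replicate_le.1 hc.ge)
  have hn : 0 < n := by
    have := card_pos.2 hS.1
    omega
  have hTcard : card T = n := by
    rw [card_add, card_replicate] at hlen
    omega
  have hT0 : T ≠ 0 := by rw [Ne, ← card_eq_zero]; omega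
  have he₁ : addOrderOf e₁ = n := by
    have hlt := hS.lt_addOrderOf (le_add_right _ _) (by rw [card_add, card_replicate]; omega)
    have hle := Nat.le_of_dvd hn (addOrderOf_dvd_of_nsmul_eq_zero (hexp e₁))
    omega
  have hQ := natCard_quotient_zmultiples hG he₁
  obtain ⟨c, hc_ord, hW⟩ := (hS.map_mk_zmultiples he₁ hT0).exists_addOrderOf_eq_replicate
    (by rw [card_map, hTcard, hQ])
  have hmk : ∀ t ∈ T, (t : G ⧸ AddSubgroup.zmultiples e₁) = c := fun t ht =>
    eq_of_mem_replicate (hW ▸ mem_map_of_mem (QuotientAddGroup.mk' _) ht)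
  obtain ⟨e₂, he₂⟩ := exists_mem_of_ne_zero hT0
  have hbasis : IsBasisPair n e₁ e₂ :=
    isBasisPair_of_addOrderOf_mk hG hexp he₁ (by rw [hmk e₂ he₂, hc_ord, hQ])
  obtain ⟨x, hx, hT⟩ := exists_eq_map_zsmul_add hTcard fun t ht =>
    QuotientAddGroup.eq.1 ((hmk e₂ he₂).trans (hmk t ht).symm)
  rw [he₁] at hx
  subst hT
  refine ⟨e₂, hbasis, x, fun ν => Nat.le_sub_one_of_lt (hx ν), ?_, rfl⟩
  have hsum := hS.2.1
  rw [sum_add, sum_replicate, ← Finset.sum_eq_multiset_sum, Finset.sum_add_distrib,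
    Finset.sum_const, Finset.card_univ, Fintype.card_fin, hexp, add_zero, ← Finset.sum_smul,
    ← Nat.cast_sum, natCast_zsmul] at hsum
  have h : (∑ ν, x ν) • e₁ = 1 • e₁ := by
    apply add_left_cancel (a := (n - 1) • e₁)
    rw [hsum, ← add_nsmul, Nat.sub_add_cancel hn, hexp]
  simpa only [he₁] using nsmul_eq_nsmul_iff_modEq.1 h

theorem stmt_15_general (n : ℕ)
    (hB : ∀ S : Multiset (ZMod n × ZMod n), IsMinZeroSum S →
        Multiset.card S = 2 * n - 1 →
        ∃ g : ZMod n × ZMod n, S.count g = n - 1)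
    (S : Multiset (ZMod n × ZMod n)) (hmin : IsMinZeroSum S)
    (hlen : Multiset.card S = 2 * n - 1) :
    ∃ e1 e2 : ZMod n × ZMod n, IsBasisPair n e1 e2 ∧
      ∃ x : Fin n → ℕ, (∀ ν, x ν ≤ n - 1) ∧ (∑ ν, x ν) ≡ 1 [MOD n] ∧
        S = Multiset.replicate (n - 1) e1 +
          Multiset.map (fun ν => (x ν : ℤ) • e1 + e2) Finset.univ.val := by
  have : NeZero n := ⟨by rintro rfl; exact hmin.1 (card_eq_zero.1 hlen)⟩
  obtain ⟨e1, he1⟩ := hB S hmin hlen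
  obtain ⟨e2, hbasis, hx⟩ := hmin.exists_isBasisPair_of_count_eq
    (by rw [Nat.card_prod, Nat.card_zmod]) (fun g => by ext <;> simp) hlen he1
  exact ⟨e1, e2, hbasis, hx⟩

theorem stmt_15 (n : ℕ) (hn : 2 ≤ n)
    (hB : ∀ S : Multiset (ZMod n × ZMod n), IsMinZeroSum S →
        Multiset.card S = 2 * n - 1 →
        ∃ g : ZMod n × ZMod n, S.count g = n - 1)
    (S : Multiset (ZMod n × ZMod n)) (hmin : IsMinZeroSum S)
    (hlen : Multiset.card S = 2 * n - 1) :
    ∃ e1 e2 : ZMod n × ZMod n, IsBasisPair n e1 e2 ∧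
      ∃ x : Fin n → ℕ, (∀ ν, x ν ≤ n - 1) ∧ (∑ ν, x ν) ≡ 1 [MOD n] ∧
        S = Multiset.replicate (n - 1) e1 +
          Multiset.map (fun ν => (x ν : ℤ) • e1 + e2) Finset.univ.val :=
  stmt_15_general n hB S hmin hlen
end

section
/- Let G = C_n ⊕ C_n with n ≥ 2 and basis (e_1, e_2'). Suppose S is a minimal zero-sum sequence over G of length 2n−1 with v_{e_1}(S) = n−1. Then there exist b ∈ [0, n−1] with gcd(b, n) = 1 and a_1', …, a_n' ∈ [0, n−1] with a_1' + … + a_n' ≡ 1 (mod n), such that S = e_1^{n−1} ∏_{ν=1}^{n} (a_ν' e_1 + b e_2'). -/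
/-!
Write `S = e₁^{n-1} T` with `|T| = n`. If a proper nonempty `T' ⊆ T` had second coordinates
summing to `0`, its sum would be `c e₁` and `e₁^{n-c} T'` (just `T'` when `c = 0`) would be a
proper zero-sum subsequence of `S`. So the second coordinates of `T` form a sequence of length `n`
over `C_n` without proper nonempty zero-sum subsequences, and such a sequence is `β^n` with `β` a
generator: its `n` prefix sums are distinct, hence exhaust `C_n`, and comparing the prefix sums of
`x y …` and `y x …` forces `x = y`. The first coordinates of `T` sum to those of
`-(n-1) e₁ = e₁`.
-/

open Multiset

def HasNoProperZeroSum {G : Type*} [AddCommGroup G] (S : Multiset G) : Prop :=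
  ∀ T ≤ S, T ≠ 0 → T ≠ S → T.sum ≠ 0

theorem Multiset.exists_le_map_eq_of_le_map {α β : Type*} {f : α → β} {s : Multiset α}
    {B : Multiset β} (h : B ≤ s.map f) : ∃ t ≤ s, t.map f = B := by
  induction s using Quotient.inductionOn
  induction B using Quotient.inductionOn
  obtain ⟨b, hperm, hsub⟩ := h
  obtain ⟨l, hl, rfl⟩ := List.sublist_map_iff.mp hsub
  exact ⟨l, hl.subperm, Quot.sound hperm⟩

theorem Multiset.exists_eq_map_univ {α : Type*} {s : Multiset α} {n : ℕ} (h : card s = n) :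
    ∃ t : Fin n → α, s = Finset.univ.val.map t := by
  subst h
  refine ⟨fun i => s.toList.get (i.cast (by simp)), ?_⟩
  rw [Fin.univ_val_map]
  conv_lhs => rw [← coe_toList s, ← List.ofFn_get s.toList]
  simp

section
variable {G : Type*} [AddCommGroup G]

theorem HasNoProperZeroSum.injective_sum_take {l : List G}
    (h : HasNoProperZeroSum (l : Multiset G)) :
    Function.Injective fun i : Fin l.length => (l.take (i + 1)).sum := by
  suffices key : ∀ i j : Fin l.length, i < j → (l.take (i + 1)).sum ≠ (l.take (j + 1)).sum by
    intro i j hij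
    by_contra hne
    rcases lt_or_gt_of_ne hne with hlt | hlt
    exacts [key i j hlt hij, key j i hlt hij.symm]
  intro i j hlt hij
  -- the block of entries `i + 1, …, j` is then a proper nonempty zero-sum subsequence
  set block := (l.take (j + 1)).drop (i + 1)
  have hlen : block.length = j - i := by
    simp only [block, List.length_drop, List.length_take]; omega
  have hsum : (l.take (i + 1)).sum + block.sum = (l.take (j + 1)).sum := by
    rw [← List.sum_take_add_sum_drop (l.take (j + 1)) (i + 1), List.take_take,
      min_eq_left (by omega)]
  refine h block ((List.drop_sublist _ _).trans (List.take_sublist _ _)).subperm ?_ ?_ ?_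
  · rw [Ne, ← card_eq_zero, coe_card, hlen]; omega
  · intro heq
    have := congrArg card heq
    rw [coe_card, coe_card, hlen] at this; omega
  · rw [sum_coe]
    exact (add_eq_left.mp (hsum.trans hij.symm))

theorem HasNoProperZeroSum.eq_of_cons_cons [Finite G] {x y : G} {r : List G}
    (h : HasNoProperZeroSum ((x :: y :: r : List G) : Multiset G))
    (hlen : r.length + 2 = Nat.card G) : x = y := by
  have h' : HasNoProperZeroSum ((y :: x :: r : List G) : Multiset G) := by
    rwa [coe_eq_coe.mpr (List.Perm.swap x y r)]
  have hsurj := ((Nat.bijective_iff_injective_and_card _).mpr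
    ⟨h.injective_sum_take, by simpa using hlen⟩).surjective
  obtain ⟨⟨j, hj⟩, hy⟩ := hsurj y
  cases j with
  | zero => simpa using hy
  | succ k =>
    -- `y` would be both the first and the `(k + 2)`-nd prefix sum of `y :: x :: r`
    have heq : ((y :: x :: r).take (k + 2)).sum = ((y :: x :: r).take 1).sum := by
      simp only [List.take_succ_cons, List.sum_cons, List.take_zero, List.sum_nil,
        add_zero] at hy ⊢
      rw [add_left_comm, hy]
    have := h'.injective_sum_take (a₁ := ⟨k + 1, by simpa using hj⟩) (a₂ := ⟨0, by simp⟩) heq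
    simp [Fin.ext_iff] at this

theorem HasNoProperZeroSum.eq_replicate [Finite G] {S : Multiset G} (h : HasNoProperZeroSum S)
    (hcard : card S = Nat.card G) :
    ∃ g, addOrderOf g = Nat.card G ∧ S = replicate (Nat.card G) g := by
  obtain ⟨x, hx⟩ := card_pos_iff_exists_mem.mp (hcard ▸ Nat.card_pos)
  have hall : ∀ y ∈ S, y = x := by
    intro y hy
    classical
    by_contra hne
    obtain ⟨R, hR⟩ := exists_cons_of_mem ((mem_erase_of_ne hne).mpr hy)
    have hS : S = ((x :: y :: R.toList : List G) : Multiset G) := by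
      rw [← cons_erase hx, hR, ← cons_coe, ← cons_coe, coe_toList]
    rw [hS] at h hcard
    exact hne (h.eq_of_cons_cons (by simpa using hcard)).symm
  have hS : S = replicate (Nat.card G) x := Multiset.eq_replicate.mpr ⟨hcard, hall⟩
  refine ⟨x, ?_, hS⟩
  have hpos : 0 < addOrderOf x := addOrderOf_pos x
  have hle : addOrderOf x ≤ Nat.card G := Nat.le_of_dvd Nat.card_pos (addOrderOf_dvd_natCard x)
  by_contra hne
  refine h (replicate (addOrderOf x) x) (hS ▸ (replicate_le_replicate x).mpr hle) ?_ ?_ ?_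
  · rw [Ne, ← card_eq_zero, card_replicate]; exact hpos.ne'
  · rw [hS]; intro heq; exact hne (by simpa using congrArg card heq)
  · simp [sum_replicate, addOrderOf_nsmul_eq_zero]

end

section
variable {G H : Type*} [AddCommGroup G] [AddCommGroup H] {e : G} {T : Multiset G}

theorem sum_eq_of_sum_replicate_addOrderOf_sub_one_add (he : IsOfFinAddOrder e)
    (h : (replicate (addOrderOf e - 1) e + T).sum = 0) : T.sum = e := by
  have hcycle : (addOrderOf e - 1) • e + e = 0 := by
    rw [← succ_nsmul, Nat.sub_add_cancel he.addOrderOf_pos, addOrderOf_nsmul_eq_zero]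
  rw [sum_add, sum_replicate] at h
  exact add_left_cancel (h.trans hcycle.symm)

theorem HasNoProperZeroSum.sum_notMem_zmultiples_of_replicate_add (he : IsOfFinAddOrder e)
    (h : HasNoProperZeroSum (replicate (addOrderOf e - 1) e + T)) {T' : Multiset G}
    (hle : T' ≤ T) (hT'0 : T' ≠ 0) (hne : T' ≠ T) : T'.sum ∉ AddSubgroup.zmultiples e := by
  classical
  intro hmem
  -- complete `T'` to a zero sum with fewer than `addOrderOf e` copies of `e`
  obtain ⟨m, hm, hme⟩ := Finset.mem_image.mp
    ((he.mem_zmultiples_iff_mem_range_addOrderOf).mp (neg_mem hmem))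
  rw [Finset.mem_range] at hm
  have hcard : card T' < card T := card_lt_card (lt_of_le_of_ne hle hne)
  refine h (replicate m e + T') (add_le_add ((replicate_le_replicate e).mpr (by omega)) hle)
    (by simp [hT'0]) ?_ (by rw [sum_add, sum_replicate, hme, neg_add_cancel])
  intro heq
  have := congrArg card heq
  simp only [card_add, card_replicate] at this
  omega

theorem HasNoProperZeroSum.map_of_replicate_add (he : IsOfFinAddOrder e)
    (h : HasNoProperZeroSum (replicate (addOrderOf e - 1) e + T)) {f : G →+ H}
    (hf : ∀ g, f g = 0 → g ∈ AddSubgroup.zmultiples e) : HasNoProperZeroSum (T.map f) := by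
  intro B hB hB0 hBne hBsum
  obtain ⟨T', hle, rfl⟩ := exists_le_map_eq_of_le_map hB
  refine h.sum_notMem_zmultiples_of_replicate_add he hle (by rintro rfl; simp at hB0)
    (by rintro rfl; exact hBne rfl) (hf _ ?_)
  rwa [map_multiset_sum]

end

section
variable {n : ℕ} [NeZero n] {G : Type*} [AddCommGroup G] [Module (ZMod n) G]

theorem ZMod.val_nsmul_eq_smul (p : ZMod n) (x : G) : p.val • x = p • x := by
  rw [← Nat.cast_smul_eq_nsmul (ZMod n), ZMod.natCast_zmod_val]

theorem ZMod.gcd_val_eq_one_of_addOrderOf_eq {p : ZMod n} (hp : addOrderOf p = n) :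
    Nat.gcd p.val n = 1 := by
  rw [← ZMod.natCast_zmod_val p, ZMod.addOrderOf_coe _ (NeZero.ne n), Nat.div_eq_self] at hp
  simpa [Nat.gcd_comm, NeZero.ne n] using hp

theorem ZMod.smul_eq_zero_iff_of_addOrderOf_eq {x : G} (hx : addOrderOf x = n) {p : ZMod n} :
    p • x = 0 ↔ p = 0 := by
  rw [← ZMod.val_nsmul_eq_smul, ← addOrderOf_dvd_iff_nsmul_eq_zero, hx,
    ← ZMod.natCast_eq_zero_iff, ZMod.natCast_zmod_val]

namespace IsBasisPair
variable {e1 e2 : G}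

theorem bijective_coprod (h : IsBasisPair n e1 e2) :
    Function.Bijective ((LinearMap.toSpanSingleton (ZMod n) G e1).coprod
      (LinearMap.toSpanSingleton (ZMod n) G e2)) := by
  obtain ⟨ho1, ho2, hgen, hind⟩ := h
  refine ⟨(injective_iff_map_eq_zero _).mpr ?_, fun g => ?_⟩
  · rintro ⟨p, q⟩ hpq
    simp only [LinearMap.coprod_apply, LinearMap.toSpanSingleton_apply,
      ← ZMod.val_nsmul_eq_smul, ← natCast_zsmul] at hpq
    obtain ⟨hp, hq⟩ := hind _ _ hpq
    rw [natCast_zsmul, ZMod.val_nsmul_eq_smul, ZMod.smul_eq_zero_iff_of_addOrderOf_eq ho1] at hp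
    rw [natCast_zsmul, ZMod.val_nsmul_eq_smul, ZMod.smul_eq_zero_iff_of_addOrderOf_eq ho2] at hq
    rw [hp, hq, Prod.mk_zero_zero]
  · obtain ⟨x, y, rfl⟩ := hgen g
    exact ⟨(x, y), by simp [Int.cast_smul_eq_zsmul]⟩

noncomputable def equiv (h : IsBasisPair n e1 e2) : (ZMod n × ZMod n) ≃ₗ[ZMod n] G :=
  LinearEquiv.ofBijective _ h.bijective_coprod

theorem equiv_apply (h : IsBasisPair n e1 e2) (p : ZMod n × ZMod n) :
    h.equiv p = p.1 • e1 + p.2 • e2 := rfl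

theorem equiv_symm_left (h : IsBasisPair n e1 e2) : h.equiv.symm e1 = (1, 0) := by
  rw [LinearEquiv.symm_apply_eq, equiv_apply]; simp

theorem eq_smul_add_smul (h : IsBasisPair n e1 e2) (g : G) :
    g = (h.equiv.symm g).1 • e1 + (h.equiv.symm g).2 • e2 := by
  rw [← h.equiv_apply, LinearEquiv.apply_symm_apply]

theorem eq_val_zsmul_add_val_zsmul (h : IsBasisPair n e1 e2) (g : G) :
    g = ((h.equiv.symm g).1.val : ℤ) • e1 + ((h.equiv.symm g).2.val : ℤ) • e2 := by
  rw [natCast_zsmul, natCast_zsmul, ZMod.val_nsmul_eq_smul, ZMod.val_nsmul_eq_smul]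
  exact h.eq_smul_add_smul g

theorem mem_zmultiples_of_equiv_symm_snd_eq_zero (h : IsBasisPair n e1 e2) {g : G}
    (hg : (h.equiv.symm g).2 = 0) : g ∈ AddSubgroup.zmultiples e1 := by
  rw [h.eq_smul_add_smul g, hg, zero_smul, add_zero]
  exact zmod_smul_mem (AddSubgroup.mem_zmultiples e1) _

end IsBasisPair
end

theorem stmt_19 (n : ℕ) (hn : 2 ≤ n) (e1 e2' : ZMod n × ZMod n)
    (hbasis : IsBasisPair n e1 e2')
    (S : Multiset (ZMod n × ZMod n)) (hmin : IsMinZeroSum S)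
    (hlen : Multiset.card S = 2 * n - 1) (hcount : S.count e1 = n - 1) :
    ∃ b : ℕ, b ≤ n - 1 ∧ Nat.gcd b n = 1 ∧
      ∃ a : Fin n → ℕ, (∀ ν, a ν ≤ n - 1) ∧ (∑ ν, a ν) ≡ 1 [MOD n] ∧
        S = Multiset.replicate (n - 1) e1 +
          Multiset.map (fun ν => (a ν : ℤ) • e1 + (b : ℤ) • e2') Finset.univ.val := by
  obtain ⟨-, hzero, hproper⟩ := hmin
  have : NeZero n := ⟨by omega⟩
  have ho1 : addOrderOf e1 = n := hbasis.1
  have he1 : IsOfFinAddOrder e1 := addOrderOf_pos_iff.mp (by omega)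
  set ψ := (IsBasisPair.equiv (n := n) hbasis).symm
  obtain ⟨T, rfl⟩ : ∃ T, S = replicate (addOrderOf e1 - 1) e1 + T :=
    Multiset.le_iff_exists_add.mp (le_count_iff_replicate_le.mp (by rw [hcount, ho1]))
  have hcardT : card T = n := by rw [card_add, card_replicate] at hlen; omega
  obtain ⟨β, hβ, hTβ⟩ := HasNoProperZeroSum.eq_replicate
    (HasNoProperZeroSum.map_of_replicate_add he1 hproper
      (f := ((LinearMap.snd (ZMod n) (ZMod n) (ZMod n)).comp ψ.toLinearMap).toAddMonoidHom)
      fun _ => hbasis.mem_zmultiples_of_equiv_symm_snd_eq_zero)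
    (by rw [card_map, hcardT, Nat.card_zmod])
  obtain ⟨t, rfl⟩ := exists_eq_map_univ hcardT
  have hsum : ∑ ν, (ψ (t ν)).1 = 1 := by
    have hTsum : ∑ ν, t ν = e1 := sum_eq_of_sum_replicate_addOrderOf_sub_one_add he1 hzero
    rw [← Prod.fst_sum, ← map_sum, hTsum, hbasis.equiv_symm_left]
  refine ⟨β.val, Nat.le_pred_of_lt (ZMod.val_lt β),
    ZMod.gcd_val_eq_one_of_addOrderOf_eq (by rwa [Nat.card_zmod] at hβ),
    fun ν => (ψ (t ν)).1.val, fun ν => Nat.le_pred_of_lt (ZMod.val_lt _),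
    (ZMod.natCast_eq_natCast_iff _ _ _).mp (by simpa using hsum), ?_⟩
  rw [ho1]
  congr 1
  refine map_congr rfl fun ν _ => ?_
  have hsnd : (ψ (t ν)).2 = β :=
    eq_of_mem_replicate (hTβ ▸ mem_map_of_mem _ (mem_map_of_mem t (Finset.mem_univ ν)))
  rw [← hsnd]
  exact hbasis.eq_val_zsmul_add_val_zsmul _
end
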